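/- arXiv:1902.10163 — 6 statements merged into one kernel-verified Lean document; each statement's English description precedes it below -/
import Mathlib

section
/- For the Ewens-weighted game of best choice, the weighted count W(N,k) of k-winnable permutations satisfies the recurrence W(N,k) = (N−1)·W(N−1,k) + ((N−2)!/(k−1)!)·θ·[θ(θ+1)···(θ+k−1)], for 1 ≤ k < N, with W(1,0) = θ and W(N,N) = 0. -/
/-- Number of left-to-right maxima of the permutation `π` (one-line notation
`i ↦ π i`): positions `j` such that `π i < π j` for all `i < j`. -/
def lrmaxCount {N : ℕ} (π : Equiv.Perm (Fin N)) : ℕ :=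
  (Finset.univ.filter (fun j : Fin N => ∀ i, i < j → π i < π j)).card

/-- Number of inversions of `π`: pairs of positions `i < j` with `π i > π j`. -/
def invCount {N : ℕ} (π : Equiv.Perm (Fin N)) : ℕ :=
  (Finset.univ.filter (fun p : Fin N × Fin N => p.1 < p.2 ∧ π p.2 < π p.1)).card

/-- Position `j` is a left-to-right maximum of `π`. -/
def IsLRMax {N : ℕ} (π : Equiv.Perm (Fin N)) (j : Fin N) : Prop :=
  ∀ i, i < j → π i < π j

/-- `π` is `k`-winnable: the positional strategy that rejects the first `k`
candidates (positions `0,…,k-1`) and accepts the next left-to-right maximum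
thereafter selects the position of the maximal value. -/
def KWinnable {N : ℕ} (k : ℕ) (π : Equiv.Perm (Fin N)) : Prop :=
  ∃ j : Fin N, k ≤ (j : ℕ) ∧ IsLRMax π j ∧ (∀ i, π i ≤ π j) ∧
    ∀ i : Fin N, k ≤ (i : ℕ) → i < j → ¬ IsLRMax π i

open Classical in
/-- Ewens-weighted count of `k`-winnable permutations:
`W(N,k) = Σ_{k-winnable π ∈ S_N} θ^{lrmax(π)}`. -/
noncomputable def W (R : Type*) [CommRing R] (N k : ℕ) (θ : R) : R :=
  ∑ π ∈ Finset.univ.filter (fun π : Equiv.Perm (Fin N) => KWinnable k π),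
    θ ^ lrmaxCount π

/-!
Write a permutation of `Fin (m + 1)` as a permutation `σ` of `Fin m` followed by a last value `v`.
Its left-to-right maxima are those of `σ`, together with the last position exactly when `v` is the
maximum. A permutation is `k`-winnable iff exactly one left-to-right maximum lies at a position
`≥ k`, since the position of the maximum is the last left-to-right maximum. So for `v` not maximal
winnability passes to `σ`, giving `(N - 1) W(N - 1, k)`; for `v` maximal it says that `σ` has no
left-to-right maximum from position `k` on. Deleting last entries again, the weight of such `σ`
in `S_m` is `(m - 1)! / (k - 1)!` times the weight `θ(θ+1)⋯(θ+k-1)` of all of `S_k`.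
-/

open Equiv Finset

theorem Fin.existsUnique_castSucc_iff_of_not_last {n : ℕ} {P : Fin (n + 1) → Prop}
    (h : ¬P (Fin.last n)) : (∃! i, P i) ↔ ∃! i : Fin n, P i.castSucc := by
  constructor
  · rintro ⟨i, hi, huniq⟩
    obtain ⟨i, rfl⟩ := Fin.eq_castSucc_of_ne_last (fun hil => h (hil ▸ hi))
    exact ⟨i, hi, fun j hj => Fin.castSucc_injective _ (huniq _ hj)⟩
  · rintro ⟨i, hi, huniq⟩
    refine ⟨i.castSucc, hi, fun j hj => ?_⟩
    induction j using Fin.lastCases with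
    | last => exact absurd hj h
    | cast j => rw [huniq j hj]

theorem Fin.existsUnique_iff_of_last {n : ℕ} {P : Fin (n + 1) → Prop}
    (h : P (Fin.last n)) : (∃! i, P i) ↔ ∀ i : Fin n, ¬P i.castSucc := by
  constructor
  · rintro ⟨i, -, huniq⟩ j hj
    exact Fin.castSucc_ne_last j ((huniq _ hj).trans (huniq _ h).symm)
  · intro hcast
    refine ⟨Fin.last n, h, fun j hj => ?_⟩
    induction j using Fin.lastCases with
    | last => rfl
    | cast j => exact absurd hj (hcast j)

section InsertPerm

variable {n : ℕ}

def insertPerm (p v : Fin (n + 1)) (σ : Perm (Fin n)) : Perm (Fin (n + 1)) where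
  toFun := p.insertNth v fun j => v.succAbove (σ j)
  invFun := v.insertNth p fun j => p.succAbove (σ⁻¹ j)
  left_inv i := by
    rcases eq_or_ne i p with rfl | h
    · simp
    · obtain ⟨j, rfl⟩ := Fin.exists_succAbove_eq h
      simp
  right_inv i := by
    rcases eq_or_ne i v with rfl | h
    · simp
    · obtain ⟨j, rfl⟩ := Fin.exists_succAbove_eq h
      simp

@[simp]
theorem insertPerm_apply_same (p v : Fin (n + 1)) (σ : Perm (Fin n)) :
    insertPerm p v σ p = v := by
  simp [insertPerm]

@[simp]
theorem insertPerm_apply_succAbove (p v : Fin (n + 1)) (σ : Perm (Fin n)) (j : Fin n) :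
    insertPerm p v σ (p.succAbove j) = v.succAbove (σ j) := by
  simp [insertPerm]

@[simp]
theorem insertPerm_last_apply_castSucc (v : Fin (n + 1)) (σ : Perm (Fin n)) (j : Fin n) :
    insertPerm (Fin.last n) v σ j.castSucc = v.succAbove (σ j) := by
  rw [← Fin.succAbove_last, insertPerm_apply_succAbove]

theorem insertPerm_injective (p : Fin (n + 1)) :
    Function.Injective fun x : Fin (n + 1) × Perm (Fin n) => insertPerm p x.1 x.2 := by
  rintro ⟨v, σ⟩ ⟨w, τ⟩ h
  obtain rfl : v = w := by simpa using congr($h p)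
  obtain rfl : σ = τ := Equiv.ext fun j =>
    Fin.succAbove_right_injective (p := v) (by simpa using congr($h (p.succAbove j)))
  rfl

theorem insertPerm_bijective (p : Fin (n + 1)) :
    Function.Bijective fun x : Fin (n + 1) × Perm (Fin n) => insertPerm p x.1 x.2 := by
  rw [Fintype.bijective_iff_injective_and_card]
  exact ⟨insertPerm_injective p, by simp [Fintype.card_perm, Nat.factorial_succ]⟩

theorem sum_perm_eq_sum_insertPerm {M : Type*} [AddCommMonoid M] (p : Fin (n + 1))
    (f : Perm (Fin (n + 1)) → M) :
    ∑ π, f π = ∑ v, ∑ σ, f (insertPerm p v σ) := by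
  rw [← Fintype.sum_prod_type']
  exact (Fintype.sum_bijective _ (insertPerm_bijective p) _ _ fun _ => rfl).symm

end InsertPerm

section LRMax

variable {n : ℕ}

theorem isLRMax_of_forall_le {π : Perm (Fin n)} {j : Fin n} (h : ∀ i, π i ≤ π j) :
    IsLRMax π j :=
  fun i hi => (h i).lt_of_ne (π.injective.ne hi.ne)

theorem isLRMax_last_iff (π : Perm (Fin (n + 1))) :
    IsLRMax π (Fin.last n) ↔ π (Fin.last n) = Fin.last n := by
  refine ⟨fun h => ?_, fun h => isLRMax_of_forall_le fun i => by rw [h]; exact Fin.le_last _⟩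
  by_contra hne
  have hpos : π.symm (Fin.last n) < Fin.last n :=
    (Fin.le_last _).lt_of_ne fun h' => hne (by simpa using congr(π $h').symm)
  exact (Fin.le_last _).not_gt (by simpa using h _ hpos)

theorem isLRMax_insertPerm_last_castSucc_iff (v : Fin (n + 1)) (σ : Perm (Fin n)) (j : Fin n) :
    IsLRMax (insertPerm (Fin.last n) v σ) j.castSucc ↔ IsLRMax σ j := by
  simp [IsLRMax, Fin.forall_fin_succ', (Fin.castSucc_lt_last j).not_gt]

theorem isLRMax_insertPerm_last_last_iff (v : Fin (n + 1)) (σ : Perm (Fin n)) :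
    IsLRMax (insertPerm (Fin.last n) v σ) (Fin.last n) ↔ v = Fin.last n := by
  rw [isLRMax_last_iff, insertPerm_apply_same]

theorem lrmaxCount_insertPerm_last (v : Fin (n + 1)) (σ : Perm (Fin n)) :
    lrmaxCount (insertPerm (Fin.last n) v σ) =
      lrmaxCount σ + if v = Fin.last n then 1 else 0 := by
  rw [lrmaxCount, lrmaxCount, card_filter, card_filter, Fin.sum_univ_castSucc]
  exact congr_arg₂ (· + ·)
    (sum_congr rfl fun j _ => if_congr (isLRMax_insertPerm_last_castSucc_iff v σ j) rfl rfl)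
    (if_congr (isLRMax_insertPerm_last_last_iff v σ) rfl rfl)

theorem kWinnable_iff_existsUnique (k : ℕ) (π : Perm (Fin n)) :
    KWinnable k π ↔ ∃! j : Fin n, k ≤ j ∧ IsLRMax π j := by
  constructor
  · rintro ⟨j, hkj, hj, hmax, hbefore⟩
    refine ⟨j, ⟨hkj, hj⟩, fun i ⟨hki, hi⟩ => ?_⟩
    rcases lt_trichotomy i j with hij | rfl | hji
    · exact absurd hi (hbefore i hki hij)
    · rfl
    · exact absurd (hmax i) (hi j hji).not_ge
  · rintro ⟨j, ⟨hkj, hj⟩, huniq⟩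
    have : Nonempty (Fin n) := ⟨j⟩
    obtain ⟨t, hmax⟩ := Finite.exists_max π
    have hkt : k ≤ t := by
      by_contra! htk
      exact (hj t (Fin.lt_def.2 (htk.trans_le hkj))).not_ge (hmax j)
    obtain rfl := huniq t ⟨hkt, isLRMax_of_forall_le hmax⟩
    exact ⟨t, hkt, isLRMax_of_forall_le hmax, hmax,
      fun i hki hit hi => hit.ne (huniq i ⟨hki, hi⟩)⟩

end LRMax

section WeightedCounts

variable {R : Type*} [CommRing R]

open Classical in
theorem sum_filter_pow_lrmaxCount_succ {m : ℕ} (P : Perm (Fin (m + 1)) → Prop)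
    (Q Q' : Perm (Fin m) → Prop)
    (hQ : ∀ (i : Fin m) σ, P (insertPerm (Fin.last m) i.castSucc σ) ↔ Q σ)
    (hQ' : ∀ σ, P (insertPerm (Fin.last m) (Fin.last m) σ) ↔ Q' σ) (θ : R) :
    ∑ π ∈ univ.filter P, θ ^ lrmaxCount π =
      m * ∑ σ ∈ univ.filter Q, θ ^ lrmaxCount σ +
        θ * ∑ σ ∈ univ.filter Q', θ ^ lrmaxCount σ := by
  simp only [sum_filter, sum_perm_eq_sum_insertPerm (Fin.last m), Fin.sum_univ_castSucc,
    lrmaxCount_insertPerm_last, hQ, hQ', Fin.castSucc_ne_last, if_false, if_true, add_zero,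
    sum_const, card_univ, Fintype.card_fin, nsmul_eq_mul, mul_sum, pow_succ, mul_ite, mul_zero,
    mul_comm θ, sum_mul, ite_mul, zero_mul]

noncomputable def lrmaxSum (n : ℕ) (θ : R) : R :=
  ∑ σ : Perm (Fin n), θ ^ lrmaxCount σ

theorem lrmaxSum_succ (n : ℕ) (θ : R) : lrmaxSum (n + 1) θ = (θ + n) * lrmaxSum n θ := by
  classical
  have := sum_filter_pow_lrmaxCount_succ (m := n) (fun _ => True) (fun _ => True) (fun _ => True)
    (fun _ _ => Iff.rfl) (fun _ => Iff.rfl) θ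
  simp only [filter_true] at this
  rw [lrmaxSum, lrmaxSum, this]
  ring

theorem lrmaxSum_eq_prod (n : ℕ) (θ : R) : lrmaxSum n θ = ∏ j ∈ range n, (θ + j) := by
  induction n with
  | zero => simp [lrmaxSum, lrmaxCount]
  | succ n ih => rw [lrmaxSum_succ, ih, prod_range_succ, mul_comm]

def NoLRMaxFrom {n : ℕ} (k : ℕ) (σ : Perm (Fin n)) : Prop :=
  ∀ j : Fin n, k ≤ (j : ℕ) → ¬IsLRMax σ j

open Classical in
noncomputable def noLRMaxFromSum (n k : ℕ) (θ : R) : R :=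
  ∑ σ ∈ univ.filter (NoLRMaxFrom (n := n) k), θ ^ lrmaxCount σ

theorem noLRMaxFromSum_self (k : ℕ) (θ : R) : noLRMaxFromSum k k θ = lrmaxSum k θ := by
  classical
  rw [noLRMaxFromSum, filter_true_of_mem fun σ _ j hj => absurd j.isLt hj.not_gt, lrmaxSum]

theorem noLRMaxFrom_insertPerm_last_iff {m k : ℕ} (hk : k ≤ m) (v : Fin (m + 1))
    (σ : Perm (Fin m)) :
    NoLRMaxFrom k (insertPerm (Fin.last m) v σ) ↔ v ≠ Fin.last m ∧ NoLRMaxFrom k σ := by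
  simp [NoLRMaxFrom, Fin.forall_fin_succ', isLRMax_insertPerm_last_castSucc_iff,
    isLRMax_insertPerm_last_last_iff, hk, and_comm]

theorem noLRMaxFromSum_succ {m k : ℕ} (hk : k ≤ m) (θ : R) :
    noLRMaxFromSum (m + 1) k θ = m * noLRMaxFromSum m k θ := by
  classical
  rw [noLRMaxFromSum, sum_filter_pow_lrmaxCount_succ _ (NoLRMaxFrom k) (fun _ => False)
    (fun i σ => by simp [noLRMaxFrom_insertPerm_last_iff hk])
    (fun σ => by simp [noLRMaxFrom_insertPerm_last_iff hk]), filter_false, sum_empty, mul_zero,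
    add_zero, noLRMaxFromSum]

theorem factorial_mul_noLRMaxFromSum {n k : ℕ} (hk : 1 ≤ k) (hkn : k ≤ n) (θ : R) :
    ((k - 1).factorial : R) * noLRMaxFromSum n k θ =
      (n - 1).factorial * ∏ j ∈ range k, (θ + j) := by
  induction n, hkn using Nat.le_induction with
  | base => rw [noLRMaxFromSum_self, lrmaxSum_eq_prod]
  | succ n hkn ih =>
    rw [noLRMaxFromSum_succ hkn, mul_left_comm, ih, ← mul_assoc, Nat.add_sub_cancel,
      ← Nat.mul_factorial_pred (by omega : n ≠ 0)]
    push_cast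
    ring

theorem kWinnable_insertPerm_last_castSucc_iff {m k : ℕ} (i : Fin m) (σ : Perm (Fin m)) :
    KWinnable k (insertPerm (Fin.last m) i.castSucc σ) ↔ KWinnable k σ := by
  rw [kWinnable_iff_existsUnique, kWinnable_iff_existsUnique,
    Fin.existsUnique_castSucc_iff_of_not_last (by simp [isLRMax_insertPerm_last_last_iff])]
  simp [isLRMax_insertPerm_last_castSucc_iff]

theorem kWinnable_insertPerm_last_last_iff {m k : ℕ} (hk : k ≤ m) (σ : Perm (Fin m)) :
    KWinnable k (insertPerm (Fin.last m) (Fin.last m) σ) ↔ NoLRMaxFrom k σ := by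
  rw [kWinnable_iff_existsUnique, Fin.existsUnique_iff_of_last
    (by simp [isLRMax_insertPerm_last_last_iff, hk])]
  simp [NoLRMaxFrom, isLRMax_insertPerm_last_castSucc_iff]

theorem W_succ {m k : ℕ} (hk : k ≤ m) (θ : R) :
    W R (m + 1) k θ = m * W R m k θ + θ * noLRMaxFromSum m k θ :=
  sum_filter_pow_lrmaxCount_succ _ _ _ (fun _ _ => kWinnable_insertPerm_last_castSucc_iff _ _)
    (fun _ => kWinnable_insertPerm_last_last_iff hk _) θ

end WeightedCounts

/-- recurrence for the Ewens-weighted count `W(N,k)`: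
`W(N,k) = (N−1)·W(N−1,k) + ((N−2)!/(k−1)!)·θ·θ(θ+1)⋯(θ+k−1)` for `1 ≤ k < N`,
with `W(1,0) = θ` and `W(N,N) = 0`. -/
theorem ewens_W_recurrence :
    (∀ N k : ℕ, ∀ θ : ℝ, 1 ≤ k → k < N →
      W ℝ N k θ = ((N : ℝ) - 1) * W ℝ (N - 1) k θ +
        ((Nat.factorial (N - 2) : ℝ) / (Nat.factorial (k - 1) : ℝ)) * θ *
          ∏ j ∈ Finset.range k, (θ + j)) ∧
    (∀ θ : ℝ, W ℝ 1 0 θ = θ) ∧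
    (∀ N : ℕ, ∀ θ : ℝ, W ℝ N N θ = 0) := by
  refine ⟨fun N k θ hk hkN => ?_, fun θ => ?_, fun N θ => ?_⟩
  · obtain ⟨m, rfl⟩ : ∃ m, N = m + 1 := ⟨N - 1, by omega⟩
    have hV : noLRMaxFromSum m k θ =
        ((m - 1).factorial / (k - 1).factorial : ℝ) * ∏ j ∈ range k, (θ + j) := by
      rw [div_mul_eq_mul_div, eq_div_iff (by positivity), mul_comm,
        factorial_mul_noLRMaxFromSum hk (by omega)]
    rw [W_succ (by omega), hV, Nat.add_sub_cancel, show m + 1 - 2 = m - 1 by omega]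
    push_cast
    ring
  · rw [W_succ le_rfl, noLRMaxFromSum_self, lrmaxSum_eq_prod]
    simp
  · classical
    rw [W, filter_false_of_mem fun π _ ⟨j, hj, _⟩ => j.isLt.not_ge hj, sum_empty]
end

section
/- In the Ewens model, ΔW(N,k) = W(N,k+1) − W(N,k) has the closed form ΔW(N,k) = (∏_{j=k+1}^{N−1} j) · ((Σ_{i=k+1}^{N−1} 1/i)·θ − 1) · θ · θ(θ+1)···(θ+k−1). In particular, as a polynomial in θ, ΔW(N,k) has only real roots, and its unique positive root is θ = (Σ_{i=k+1}^{N−1} 1/i)^{−1}. -/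
/-!
Let `m` be the position of the maximum of `π` and `p` that of the maximum of the entries before
`m`. Then `π` is `k`-winnable iff `p < k ≤ m`, so raising the threshold from `k` to `k + 1` loses
exactly the permutations with `m = k` and gains those with `p = k < m = j` for some `j`.

Both classes are counted by building permutations from left to right: the appended last entry is
a left-to-right maximum iff it is the largest value, so appending multiplies the Ewens weight by
`θ` if the new entry must be the maximum, by the length so far if it must not be, and by `θ` plus
the length if it is unconstrained. With `(θ)ₖ = θ (θ + 1) ⋯ (θ + k - 1)` this gives the weights
`θ (θ)ₖ ∏_{k<i<N} i` for `m = k` and `θ² (θ)ₖ ∏_{k<i<N, i≠j} i` for `p = k`, `m = j`; summing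
over `j` yields the closed form, whose roots `0, -1, …, -(k - 1)` and `(∑_{k<i<N} 1/i)⁻¹` are
real.
-/

open Finset

variable {m : ℕ}

/-- The permutation of `Fin (m + 1)` taking the value `v` at the last position and ordering the
first `m` positions as `σ` does. -/
def permSnoc (σ : Equiv.Perm (Fin m)) (v : Fin (m + 1)) : Equiv.Perm (Fin (m + 1)) :=
  finSuccEquivLast.trans ((Equiv.optionCongr σ).trans (finSuccEquiv' v).symm)

@[simp] lemma permSnoc_castSucc (σ : Equiv.Perm (Fin m)) (v : Fin (m + 1)) (i : Fin m) :
    permSnoc σ v i.castSucc = v.succAbove (σ i) := by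
  simp [permSnoc]

@[simp] lemma permSnoc_last (σ : Equiv.Perm (Fin m)) (v : Fin (m + 1)) :
    permSnoc σ v (Fin.last m) = v := by
  simp [permSnoc]

lemma permSnoc_bijective :
    Function.Bijective (fun p : Equiv.Perm (Fin m) × Fin (m + 1) => permSnoc p.1 p.2) := by
  rw [Fintype.bijective_iff_injective_and_card]
  refine ⟨fun ⟨σ, v⟩ ⟨σ', v'⟩ h => ?_, by simp [Fintype.card_perm, Nat.factorial_succ, mul_comm]⟩
  have hv : v = v' := by simpa using congr($h (Fin.last m))
  subst hv
  have hσ : σ = σ' := Equiv.ext fun i => by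
    simpa using congr($h i.castSucc)
  rw [hσ]

lemma forall_castSucc_lt_iff_eq_last {v : Fin (m + 1)} :
    (∀ j : Fin m, j.castSucc < v) ↔ v = Fin.last m := by
  refine ⟨fun h => ?_, fun h j => h ▸ Fin.castSucc_lt_last j⟩
  by_contra hv
  exact (h (v.castPred hv)).ne (Fin.castSucc_castPred v hv)

lemma isLRMax_permSnoc_castSucc (σ : Equiv.Perm (Fin m)) (v : Fin (m + 1)) (i : Fin m) :
    IsLRMax (permSnoc σ v) i.castSucc ↔ IsLRMax σ i := by
  simp [IsLRMax, Fin.forall_fin_succ', Fin.succAbove_lt_succAbove_iff,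
    (Fin.castSucc_lt_last i).not_gt]

lemma isLRMax_permSnoc_last (σ : Equiv.Perm (Fin m)) (v : Fin (m + 1)) :
    IsLRMax (permSnoc σ v) (Fin.last m) ↔ v = Fin.last m := by
  simpa [IsLRMax, Fin.forall_fin_succ', Fin.succAbove_lt_iff_castSucc_lt,
    σ.forall_congr_right (q := fun j => j.castSucc < v)] using forall_castSucc_lt_iff_eq_last

open Classical in
lemma lrmaxCount_eq_card_isLRMax {n : ℕ} (π : Equiv.Perm (Fin n)) :
    lrmaxCount π = #{j | IsLRMax π j} := by
  simp only [lrmaxCount, IsLRMax]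
  congr

lemma lrmaxCount_permSnoc (σ : Equiv.Perm (Fin m)) (v : Fin (m + 1)) :
    lrmaxCount (permSnoc σ v) = lrmaxCount σ + if v = Fin.last m then 1 else 0 := by
  classical
  simp only [lrmaxCount_eq_card_isLRMax, card_filter, Fin.sum_univ_castSucc,
    isLRMax_permSnoc_castSucc, isLRMax_permSnoc_last]

lemma forall_le_permSnoc_castSucc_iff (σ : Equiv.Perm (Fin m)) (v : Fin (m + 1)) (i : Fin m) :
    (∀ t, permSnoc σ v t ≤ permSnoc σ v i.castSucc) ↔ v ≠ Fin.last m ∧ ∀ t, σ t ≤ σ i := by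
  simp only [Fin.forall_fin_succ', permSnoc_castSucc, permSnoc_last,
    Fin.succAbove_le_succAbove_iff, and_comm (a := ∀ t, σ t ≤ σ i)]
  refine and_congr_left fun hmax => ?_
  rw [(Fin.succAbove_ne v (σ i)).symm.le_iff_lt, Fin.lt_succAbove_iff_le_castSucc]
  refine ⟨fun h hv => (hv ▸ h).not_gt (Fin.castSucc_lt_last _), fun hv => ?_⟩
  rw [← Fin.castSucc_castPred v hv, Fin.castSucc_le_castSucc_iff,
    ← σ.apply_symm_apply (v.castPred hv)]
  exact hmax _

lemma forall_le_permSnoc_last_iff (σ : Equiv.Perm (Fin m)) (v : Fin (m + 1)) :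
    (∀ t, permSnoc σ v t ≤ v) ↔ v = Fin.last m := by
  simp only [Fin.forall_fin_succ', permSnoc_castSucc, permSnoc_last, le_refl, and_true,
    fun j => (Fin.succAbove_ne v j).le_iff_lt, Fin.succAbove_lt_iff_castSucc_lt,
    σ.forall_congr_right (q := fun j => j.castSucc < v)]
  exact forall_castSucc_lt_iff_eq_last

section EwensSum

variable {R : Type*} [CommRing R]

open Classical in
noncomputable def ewensSum {n : ℕ} (θ : R) (P : Equiv.Perm (Fin n) → Prop) : R :=
  ∑ π ∈ univ.filter P, θ ^ lrmaxCount π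

open Classical in
lemma ewensSum_eq_sum_ite {n : ℕ} (θ : R) (P : Equiv.Perm (Fin n) → Prop) :
    ewensSum θ P = ∑ π, if P π then θ ^ lrmaxCount π else 0 :=
  sum_filter _ _

open Classical in
lemma ewensSum_succ (θ : R) (P : Equiv.Perm (Fin (m + 1)) → Prop) :
    ewensSum θ P = ∑ σ : Equiv.Perm (Fin m),
      ((∑ j : Fin m, if P (permSnoc σ j.castSucc) then θ ^ lrmaxCount σ else 0) +
        if P (permSnoc σ (Fin.last m)) then θ * θ ^ lrmaxCount σ else 0) := by
  rw [ewensSum_eq_sum_ite, ← Fintype.sum_bijective _ permSnoc_bijective _ _ fun _ => rfl,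
    Fintype.sum_prod_type]
  refine sum_congr rfl fun σ _ => ?_
  simp [Fin.sum_univ_castSucc, lrmaxCount_permSnoc, pow_succ, mul_comm]

lemma ewensSum_succ_of_iff_ne_last (θ : R) {P : Equiv.Perm (Fin (m + 1)) → Prop}
    {Q : Equiv.Perm (Fin m) → Prop} (h : ∀ σ v, P (permSnoc σ v) ↔ v ≠ Fin.last m ∧ Q σ) :
    ewensSum θ P = m * ewensSum θ Q := by
  classical
  simp [ewensSum_succ, h, Fin.castSucc_ne_last, ewensSum_eq_sum_ite, mul_sum]

lemma ewensSum_succ_of_iff_eq_last (θ : R) {P : Equiv.Perm (Fin (m + 1)) → Prop}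
    {Q : Equiv.Perm (Fin m) → Prop} (h : ∀ σ v, P (permSnoc σ v) ↔ v = Fin.last m ∧ Q σ) :
    ewensSum θ P = θ * ewensSum θ Q := by
  classical
  simp [ewensSum_succ, h, Fin.castSucc_ne_last, ewensSum_eq_sum_ite, mul_sum]

lemma ewensSum_univ_succ (θ : R) :
    ewensSum θ (fun _ : Equiv.Perm (Fin (m + 1)) => True) =
      (θ + m) * ewensSum θ (fun _ : Equiv.Perm (Fin m) => True) := by
  classical
  simp [ewensSum_succ, ewensSum_eq_sum_ite, mul_sum, add_mul, add_comm]

lemma ewensSum_univ (n : ℕ) (θ : R) :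
    ewensSum θ (fun _ : Equiv.Perm (Fin n) => True) = ∏ i ∈ range n, (θ + i) := by
  induction n with
  | zero => simp [ewensSum, lrmaxCount]
  | succ n ih => rw [ewensSum_univ_succ, ih, prod_range_succ, mul_comm]

lemma ewensSum_eq_prod_Ico_mul {P : (n : ℕ) → Equiv.Perm (Fin n) → Prop} {j : ℕ}
    (h : ∀ n, j ≤ n → ∀ σ v, P (n + 1) (permSnoc σ v) ↔ v ≠ Fin.last n ∧ P n σ)
    (θ : R) {n : ℕ} (hjn : j ≤ n) :
    ewensSum θ (P n) = (∏ i ∈ Ico j n, (i : R)) * ewensSum θ (P j) := by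
  induction n, hjn using Nat.le_induction with
  | base => simp
  | succ n hjn ih =>
    rw [ewensSum_succ_of_iff_ne_last θ (h n hjn), ih, prod_Ico_succ_top hjn]
    ring

end EwensSum

section MaxPositions

variable {n : ℕ}

-- Positions are natural numbers, so that these predicates make sense in every length and can be
-- followed along `permSnoc`.
def MaxAt (k : ℕ) (π : Equiv.Perm (Fin n)) : Prop :=
  ∃ i : Fin n, (i : ℕ) = k ∧ ∀ t, π t ≤ π i

def PrefixMaxAt (j k : ℕ) (π : Equiv.Perm (Fin n)) : Prop :=
  ∃ i : Fin n, (i : ℕ) = k ∧ ∀ t : Fin n, (t : ℕ) < j → π t ≤ π i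

lemma prefixMaxAt_self_iff {k : ℕ} (π : Equiv.Perm (Fin n)) : PrefixMaxAt n k π ↔ MaxAt k π := by
  simp [PrefixMaxAt, MaxAt]

lemma exists_val_eq_iff_castSucc {k : ℕ} (hk : k < m) {p : Fin (m + 1) → Prop} :
    (∃ i : Fin (m + 1), (i : ℕ) = k ∧ p i) ↔ ∃ i : Fin m, (i : ℕ) = k ∧ p i.castSucc := by
  simp [Fin.exists_fin_succ', hk.ne']

lemma maxAt_permSnoc_iff_of_lt {k : ℕ} (hk : k < m) (σ : Equiv.Perm (Fin m)) (v : Fin (m + 1)) :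
    MaxAt k (permSnoc σ v) ↔ v ≠ Fin.last m ∧ MaxAt k σ := by
  simp only [MaxAt, exists_val_eq_iff_castSucc hk, forall_le_permSnoc_castSucc_iff]
  aesop

lemma maxAt_permSnoc_iff_last (σ : Equiv.Perm (Fin m)) (v : Fin (m + 1)) :
    MaxAt m (permSnoc σ v) ↔ v = Fin.last m := by
  simp [MaxAt, Fin.exists_fin_succ', fun i : Fin m => i.isLt.ne, forall_le_permSnoc_last_iff]

lemma prefixMaxAt_permSnoc_iff {j k : ℕ} (hj : j ≤ m) (hk : k < m) (σ : Equiv.Perm (Fin m))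
    (v : Fin (m + 1)) : PrefixMaxAt j k (permSnoc σ v) ↔ PrefixMaxAt j k σ := by
  simp [PrefixMaxAt, exists_val_eq_iff_castSucc hk, Fin.forall_fin_succ', hj.not_gt,
    Fin.succAbove_le_succAbove_iff]

end MaxPositions

section ClosedForms

variable {R : Type*} [CommRing R]

lemma ewensSum_maxAt {k n : ℕ} (hk : k < n) (θ : R) :
    ewensSum θ (MaxAt k (n := n)) =
      (∏ i ∈ Ico (k + 1) n, (i : R)) * (θ * ∏ i ∈ range k, (θ + i)) := by
  rw [ewensSum_eq_prod_Ico_mul (P := fun _ => MaxAt k)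
      (fun _ hn σ v => maxAt_permSnoc_iff_of_lt hn σ v) θ hk,
    ewensSum_succ_of_iff_eq_last θ (Q := fun _ => True)
      (fun σ v => by simp [maxAt_permSnoc_iff_last]),
    ewensSum_univ]

lemma ewensSum_maxAt_prefixMaxAt {k j n : ℕ} (hkj : k < j) (hjn : j < n) (θ : R) :
    ewensSum θ (fun π : Equiv.Perm (Fin n) => MaxAt j π ∧ PrefixMaxAt j k π) =
      (∏ i ∈ Ico (j + 1) n, (i : R)) *
        (θ * ((∏ i ∈ Ico (k + 1) j, (i : R)) * (θ * ∏ i ∈ range k, (θ + i)))) := by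
  rw [ewensSum_eq_prod_Ico_mul (P := fun _ π => MaxAt j π ∧ PrefixMaxAt j k π)
      (fun _ hn σ v => by
        rw [maxAt_permSnoc_iff_of_lt hn, prefixMaxAt_permSnoc_iff (by omega) (by omega), and_assoc])
      θ hjn,
    ewensSum_succ_of_iff_eq_last θ (Q := MaxAt k)
      (fun σ v => by
        rw [maxAt_permSnoc_iff_last, prefixMaxAt_permSnoc_iff le_rfl hkj, prefixMaxAt_self_iff]),
    ewensSum_maxAt hkj]

end ClosedForms

section Winnable

variable {n k : ℕ} (π : Equiv.Perm (Fin n))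

lemma eq_of_forall_le_of_forall_le {a b : Fin n} (ha : ∀ t, π t ≤ π a) (hb : ∀ t, π t ≤ π b) :
    a = b :=
  π.injective ((hb a).antisymm (ha b))

lemma MaxAt.eq {i j : ℕ} (hi : MaxAt i π) (hj : MaxAt j π) : i = j := by
  obtain ⟨a, rfl, ha⟩ := hi
  obtain ⟨b, rfl, hb⟩ := hj
  rw [eq_of_forall_le_of_forall_le π ha hb]

lemma kWinnable_iff : KWinnable k π ↔
    ∃ j : Fin n, (∀ t, π t ≤ π j) ∧ k ≤ j ∧ ∀ i : Fin n, k ≤ i → i < j → ¬IsLRMax π i := by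
  refine ⟨fun ⟨j, hkj, _, hmax, hno⟩ => ⟨j, hmax, hkj, hno⟩,
    fun ⟨j, hmax, hkj, hno⟩ => ⟨j, hkj, fun i hi => ?_, hmax, hno⟩⟩
  exact (hmax i).lt_of_ne fun h => hi.ne (π.injective h)

lemma exists_isLRMax_forall_le {i j : Fin n} (hij : i < j) :
    ∃ p < j, IsLRMax π p ∧ ∀ t < j, π t ≤ π p := by
  classical
  obtain ⟨p, hp, hmax⟩ := exists_max_image {t | t < j} π ⟨i, by simpa using hij⟩
  simp only [mem_filter, mem_univ, true_and] at hp hmax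
  exact ⟨p, hp, fun t htp => (hmax t (htp.trans hp)).lt_of_ne fun h => htp.ne (π.injective h),
    hmax⟩

lemma kWinnable_and_not_kWinnable_succ_iff :
    KWinnable k π ∧ ¬KWinnable (k + 1) π ↔ MaxAt k π := by
  simp only [kWinnable_iff]
  constructor
  · rintro ⟨⟨j, hmax, hkj, hno⟩, hnot⟩
    refine ⟨j, ?_, hmax⟩
    by_contra hjk
    exact hnot ⟨j, hmax, by omega, fun i hi => hno i (by omega)⟩
  · rintro ⟨i, rfl, hmax⟩
    refine ⟨⟨i, hmax, le_rfl, fun t hit hti => absurd hti (not_lt.mpr hit)⟩, ?_⟩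
    rintro ⟨j, hmax', hkj, -⟩
    rw [eq_of_forall_le_of_forall_le π hmax' hmax] at hkj
    omega

lemma kWinnable_succ_and_not_kWinnable_iff :
    KWinnable (k + 1) π ∧ ¬KWinnable k π ↔
      ∃ j ∈ Ioo k n, MaxAt j π ∧ PrefixMaxAt j k π := by
  simp only [kWinnable_iff, mem_Ioo]
  constructor
  · rintro ⟨⟨j, hmax, hkj, hno⟩, hnot⟩
    obtain ⟨i, hki, hij, hi⟩ : ∃ i : Fin n, k ≤ i ∧ i < j ∧ IsLRMax π i := by
      by_contra! h
      exact hnot ⟨j, hmax, by omega, h⟩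
    have hik : (i : ℕ) = k := by
      by_contra hik
      exact hno i (by omega) hij hi
    obtain ⟨p, hpj, hp, hpmax⟩ := exists_isLRMax_forall_le π hij
    have hpi : p ≤ i := by
      by_contra! hip
      exact hno p (by rw [Fin.lt_def] at hip; omega) hpj hp
    have hpi' : π p ≤ π i := hpi.eq_or_lt.elim (fun h => h ▸ le_rfl) fun h => (hi p h).le
    exact ⟨j, ⟨by omega, j.isLt⟩, ⟨j, rfl, hmax⟩, i, hik,
      fun t ht => (hpmax t ht).trans hpi'⟩
  · rintro ⟨_, ⟨hkj, -⟩, ⟨j, rfl, hmax⟩, i, rfl, hpre⟩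
    refine ⟨⟨j, hmax, hkj, fun t hkt htj hlr => (hpre t htj).not_gt (hlr i (by omega))⟩, ?_⟩
    rintro ⟨j', hmax', -, hno⟩
    obtain rfl := eq_of_forall_le_of_forall_le π hmax' hmax
    refine hno i le_rfl hkj fun t hti => (hpre t (hti.trans hkj)).lt_of_ne fun h => ?_
    exact hti.ne (π.injective h)

end Winnable

section Difference

variable {R : Type*} [CommRing R] {n : ℕ}

lemma ewensSum_sub_ewensSum (θ : R) (P Q : Equiv.Perm (Fin n) → Prop) :
    ewensSum θ P - ewensSum θ Q =
      ewensSum θ (fun π => P π ∧ ¬Q π) - ewensSum θ (fun π => Q π ∧ ¬P π) := by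
  classical
  rw [ewensSum, ewensSum, ← sum_sdiff_sub_sum_sdiff]
  congr 2 <;> ext <;> simp

open Classical in
lemma ewensSum_exists {ι : Type*} (θ : R) (s : Finset ι) (P : ι → Equiv.Perm (Fin n) → Prop)
    (hP : ∀ π, ∀ i ∈ s, ∀ j ∈ s, P i π → P j π → i = j) :
    ewensSum θ (fun π => ∃ i ∈ s, P i π) = ∑ i ∈ s, ewensSum θ (P i) := by
  simp only [ewensSum]
  rw [← sum_biUnion fun i hi j hj hij =>
    disjoint_filter.2 fun π _ hPi hPj => hij (hP π i hi j hj hPi hPj)]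
  congr 1
  ext
  simp

end Difference

lemma prod_Ico_mul_mul_prod_Ico {M : Type*} [CommMonoid M] (f : ℕ → M) {a b c : ℕ}
    (hab : a ≤ b) (hbc : b < c) :
    (∏ i ∈ Ico a b, f i) * (f b * ∏ i ∈ Ico (b + 1) c, f i) = ∏ i ∈ Ico a c, f i := by
  rw [← prod_eq_prod_Ico_succ_bot hbc, prod_Ico_consecutive f hab hbc.le]

lemma W_succ_sub_W (K : Type*) [Field K] [CharZero K] {N k : ℕ} (hkN : k < N) (θ : K) :
    W K N (k + 1) θ - W K N k θ =
      (∏ j ∈ Icc (k + 1) (N - 1), (j : K)) *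
        ((∑ i ∈ Icc (k + 1) (N - 1), (1 : K) / i) * θ - 1) * θ * ∏ j ∈ range k, (θ + j) := by
  have hdiff : W K N (k + 1) θ - W K N k θ =
      ∑ j ∈ Ioo k N, ewensSum θ (fun π : Equiv.Perm (Fin N) => MaxAt j π ∧ PrefixMaxAt j k π) -
        ewensSum θ (MaxAt k (n := N)) := by
    rw [W, W, ← ewensSum, ← ewensSum, ewensSum_sub_ewensSum]
    simp_rw [kWinnable_succ_and_not_kWinnable_iff, kWinnable_and_not_kWinnable_succ_iff]
    exact congrArg (· - _) (ewensSum_exists θ _ _ fun π i _ j _ hi hj => hi.1.eq π hj.1)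
  have hterm : ∀ j ∈ Ioo k N,
      ewensSum θ (fun π : Equiv.Perm (Fin N) => MaxAt j π ∧ PrefixMaxAt j k π) =
        (∏ i ∈ Ioo k N, (i : K)) * (1 / j) * (θ * θ * ∏ i ∈ range k, (θ + i)) := by
    intro j hj
    rw [mem_Ioo] at hj
    rw [ewensSum_maxAt_prefixMaxAt hj.1 hj.2, ← Ico_add_one_left_eq_Ioo,
      ← prod_Ico_mul_mul_prod_Ico (fun i => (i : K)) (by omega : k + 1 ≤ j) hj.2]
    have : (j : K) ≠ 0 := by exact_mod_cast (by omega : j ≠ 0)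
    field_simp
  rw [show Icc (k + 1) (N - 1) = Ioo k N by ext; simp; omega, hdiff, sum_congr rfl hterm,
    ← sum_mul, ← mul_sum, ewensSum_maxAt hkN, Ico_add_one_left_eq_Ioo]
  ring

lemma W_succ_sub_W_eq_zero_iff (K : Type*) [Field K] [CharZero K] {N k : ℕ} (hkN : k < N)
    (θ : K) : W K N (k + 1) θ - W K N k θ = 0 ↔
      (∑ i ∈ Icc (k + 1) (N - 1), (1 : K) / i) * θ = 1 ∨ θ = 0 ∨ ∃ j ∈ range k, θ + j = 0 := by
  have hprod : ∏ j ∈ Icc (k + 1) (N - 1), (j : K) ≠ 0 :=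
    prod_ne_zero_iff.2 fun i hi => Nat.cast_ne_zero.2 (by simp at hi; omega)
  simp [W_succ_sub_W K hkN, hprod, sub_eq_zero, prod_eq_zero_iff, or_assoc]

lemma im_eq_zero_of_W_succ_sub_W_eq_zero {N k : ℕ} (hkN : k < N) {z : ℂ}
    (hz : W ℂ N (k + 1) z - W ℂ N k z = 0) : z.im = 0 := by
  rcases (W_succ_sub_W_eq_zero_iff ℂ hkN z).1 hz with hS | rfl | ⟨j, -, hj⟩
  · have hz : z = ((∑ i ∈ Icc (k + 1) (N - 1), (1 : ℝ) / i)⁻¹ : ℝ) := by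
      push_cast
      exact eq_inv_of_mul_eq_one_right hS
    rw [hz, Complex.ofReal_im]
  · rfl
  · simp [eq_neg_of_add_eq_zero_left hj]

lemma W_succ_sub_W_eq_zero_iff_of_pos {N k : ℕ} (hkN : k < N) {θ : ℝ} (hθ : 0 < θ) :
    W ℝ N (k + 1) θ - W ℝ N k θ = 0 ↔ θ = (∑ i ∈ Icc (k + 1) (N - 1), (1 : ℝ) / i)⁻¹ := by
  have hθj : ∀ j : ℕ, θ + j ≠ 0 := fun j => by positivity
  simp [W_succ_sub_W_eq_zero_iff ℝ hkN, hθ.ne', hθj, eq_comm (a := θ), inv_eq_iff_eq_inv,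
    mul_eq_one_iff_eq_inv₀ hθ.ne']

/-- closed form for `ΔW(N,k) = W(N,k+1) − W(N,k)` in the Ewens model:
`ΔW(N,k) = (∏_{j=k+1}^{N−1} j)·((Σ_{i=k+1}^{N−1} 1/i)·θ − 1)·θ·θ(θ+1)⋯(θ+k−1)`.
In particular, as a polynomial in `θ` it has only real roots, and its unique
positive root is `θ = (Σ_{i=k+1}^{N−1} 1/i)⁻¹`. -/
theorem ewens_deltaW_closed_form (N k : ℕ) (h : k + 2 ≤ N) :
    (∀ θ : ℝ, W ℝ N (k + 1) θ - W ℝ N k θ =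
      (∏ j ∈ Finset.Icc (k + 1) (N - 1), (j : ℝ)) *
        ((∑ i ∈ Finset.Icc (k + 1) (N - 1), (1 : ℝ) / i) * θ - 1) * θ *
        ∏ j ∈ Finset.range k, (θ + j)) ∧
    (∀ z : ℂ, W ℂ N (k + 1) z - W ℂ N k z = 0 → z.im = 0) ∧
    (∀ θ : ℝ, 0 < θ →
      (W ℝ N (k + 1) θ - W ℝ N k θ = 0 ↔
        θ = (∑ i ∈ Finset.Icc (k + 1) (N - 1), (1 : ℝ) / i)⁻¹)) := by
  have hkN : k < N := by omega
  exact ⟨W_succ_sub_W ℝ hkN, fun _ => im_eq_zero_of_W_succ_sub_W_eq_zero hkN,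
    fun _ => W_succ_sub_W_eq_zero_iff_of_pos hkN⟩
end

section
/- In the Ewens model, for all N and 1 ≤ k ≤ N−1, W(N,k) = θ · θ(θ+1)···(θ+k−1) · ((N−1)!/(k−1)!) · Σ_{i=k}^{N−1} 1/i, and W(N,0) = (N−1)!·θ. -/
namespace EwensAux

open Finset Equiv

open Classical in
/-- Number of left-to-right maxima of `π` at positions `≥ k`. -/
noncomputable def L {N : ℕ} (k : ℕ) (π : Equiv.Perm (Fin N)) : ℕ :=
  (Finset.univ.filter (fun j : Fin N => k ≤ (j : ℕ) ∧ IsLRMax π j)).card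

/-- Insert value `v` at the last position, relabelling `σ` on earlier positions. -/
def ins {N : ℕ} (v : Fin (N + 1)) (σ : Equiv.Perm (Fin N)) : Equiv.Perm (Fin (N + 1)) :=
  (finSuccEquivLast.trans (Equiv.optionCongr σ)).trans (finSuccEquiv' v).symm

variable {N : ℕ}

lemma ins_last (v : Fin (N + 1)) (σ : Equiv.Perm (Fin N)) : ins v σ (Fin.last N) = v := by
  simp [ins]

lemma ins_castSucc (v : Fin (N + 1)) (σ : Equiv.Perm (Fin N)) (i : Fin N) :
    ins v σ (Fin.castSucc i) = v.succAbove (σ i) := by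
  simp [ins]

lemma ins_bijective :
    Function.Bijective (fun p : Fin (N + 1) × Equiv.Perm (Fin N) => ins p.1 p.2) := by
  rw [Fintype.bijective_iff_injective_and_card]
  constructor
  · rintro ⟨v, σ⟩ ⟨v', σ'⟩ h
    simp only at h
    have hv : v = v' := by
      have := congrArg (fun π : Equiv.Perm (Fin (N + 1)) => π (Fin.last N)) h
      simpa [ins_last] using this
    subst hv
    have hσ : σ = σ' := by
      apply Equiv.ext
      intro i
      have := congrArg (fun π : Equiv.Perm (Fin (N + 1)) => π (Fin.castSucc i)) h
      simp only [ins_castSucc] at this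
      exact Fin.succAbove_right_injective this
    rw [hσ]
  · simp [Fintype.card_perm, Nat.factorial_succ]

lemma isLRMax_ins_castSucc (v : Fin (N + 1)) (σ : Equiv.Perm (Fin N)) (j : Fin N) :
    IsLRMax (ins v σ) (Fin.castSucc j) ↔ IsLRMax σ j := by
  constructor
  · intro h i hi
    have := h (Fin.castSucc i) (by simpa using hi)
    rw [ins_castSucc, ins_castSucc] at this
    exact Fin.succAbove_lt_succAbove_iff.mp this
  · intro h i hi
    induction i using Fin.lastCases with
    | last => exact absurd hi (Fin.castSucc_lt_last j).asymm
    | cast i =>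
      rw [ins_castSucc, ins_castSucc]
      exact Fin.succAbove_lt_succAbove_iff.mpr (h i (by simpa using hi))

lemma isLRMax_ins_last (v : Fin (N + 1)) (σ : Equiv.Perm (Fin N)) :
    IsLRMax (ins v σ) (Fin.last N) ↔ v = Fin.last N := by
  constructor
  · intro h
    by_contra hv
    obtain ⟨x, hx⟩ : ∃ x, ins v σ x = Fin.last N := ⟨(ins v σ).symm (Fin.last N), by simp⟩
    have hxne : x ≠ Fin.last N := by
      intro e; rw [e, ins_last] at hx; exact hv hx
    have := h x (Fin.lt_last_iff_ne_last.mpr hxne)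
    rw [hx, ins_last] at this
    exact absurd (Fin.le_last v) (not_le.mpr this)
  · rintro rfl i hi
    induction i using Fin.lastCases with
    | last => exact absurd hi (lt_irrefl _)
    | cast i =>
      rw [ins_castSucc, ins_last, Fin.succAbove_last]
      exact Fin.castSucc_lt_last _

lemma L_ins (k : ℕ) (hk : k ≤ N) (v : Fin (N + 1)) (σ : Equiv.Perm (Fin N)) :
    L k (ins v σ) = L k σ + (if v = Fin.last N then 1 else 0) := by
  classical
  unfold L
  rw [Finset.card_filter, Finset.card_filter, Fin.sum_univ_castSucc]
  congr 1
  · refine Finset.sum_congr rfl fun j _ => ?_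
    simp [isLRMax_ins_castSucc]
  · simp [isLRMax_ins_last, hk, Fin.val_last]

lemma lrmax_eq (π : Equiv.Perm (Fin N)) : lrmaxCount π = L 0 π := by
  unfold lrmaxCount L
  congr 1
  ext j
  simp [IsLRMax]

lemma lrmax_ins (v : Fin (N + 1)) (σ : Equiv.Perm (Fin N)) :
    lrmaxCount (ins v σ) = lrmaxCount σ + (if v = Fin.last N then 1 else 0) := by
  rw [lrmax_eq, lrmax_eq, L_ins 0 (Nat.zero_le N)]

open Classical in
lemma kwinnable_iff (k : ℕ) (π : Equiv.Perm (Fin N)) :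
    KWinnable k π ↔ L k π = 1 := by
  constructor
  · rintro ⟨j, hjk, hmax, hglob, hno⟩
    rw [L, Finset.card_eq_one]
    refine ⟨j, ?_⟩
    ext i
    simp only [Finset.mem_filter, Finset.mem_univ, true_and, Finset.mem_singleton]
    constructor
    · rintro ⟨hik, hi⟩
      rcases lt_trichotomy i j with h | h | h
      · exact absurd hi (hno i hik h)
      · exact h
      · exact absurd (hglob i) (not_le.mpr (hi j h))
    · rintro rfl; exact ⟨hjk, hmax⟩
  · intro h
    rw [L, Finset.card_eq_one] at h
    obtain ⟨j, hj⟩ := h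
    have hmem : ∀ i : Fin N, (k ≤ (i : ℕ) ∧ IsLRMax π i) ↔ i = j := by
      intro i
      rw [← Finset.mem_singleton, ← hj]
      simp
    obtain ⟨hjk, hjmax⟩ := (hmem j).mpr rfl
    have : Nonempty (Fin N) := ⟨j⟩
    obtain ⟨m, hm⟩ := Finite.exists_max (fun i => π i)
    have hmmax : IsLRMax π m := fun i hi =>
      lt_of_le_of_ne (hm i) (fun e => (ne_of_lt hi) (π.injective e))
    have hmj : m = j := by
      by_cases hkm : k ≤ (m : ℕ)
      · exact (hmem m).mp ⟨hkm, hmmax⟩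
      · exfalso
        have hmltj : m < j := by
          have h1 : (m : ℕ) < k := not_le.mp hkm
          exact Fin.lt_def.mpr (lt_of_lt_of_le h1 hjk)
        exact absurd (hjmax m hmltj) (not_lt.mpr (hm j))
    rw [hmj] at hm
    exact ⟨j, hjk, hjmax, hm, fun i hik hij hmax' => (ne_of_lt hij) ((hmem i).mp ⟨hik, hmax'⟩)⟩

noncomputable def RR (N : ℕ) (θ : ℝ) : ℝ := ∑ π : Equiv.Perm (Fin N), θ ^ lrmaxCount π

noncomputable def AA (N k : ℕ) (θ : ℝ) : ℝ :=
  ∑ π : Equiv.Perm (Fin N), if L k π = 0 then θ ^ lrmaxCount π else 0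

noncomputable def GG (N k : ℕ) (θ : ℝ) : ℝ :=
  ∑ π : Equiv.Perm (Fin N), if L k π = 1 then θ ^ lrmaxCount π else 0

lemma sum_ins (f : Equiv.Perm (Fin (N + 1)) → ℝ) :
    ∑ π : Equiv.Perm (Fin (N + 1)), f π
      = ∑ v : Fin (N + 1), ∑ σ : Equiv.Perm (Fin N), f (ins v σ) := by
  have h := Fintype.sum_bijective _ (ins_bijective (N := N))
    (fun p : Fin (N + 1) × Equiv.Perm (Fin N) => f (ins p.1 p.2)) f (fun p => rfl)
  rw [← h, Fintype.sum_prod_type]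

lemma RR_succ (θ : ℝ) : RR (N + 1) θ = (θ + N) * RR N θ := by
  rw [RR, sum_ins, Fin.sum_univ_castSucc]
  have h1 : ∀ w : Fin N,
      (∑ σ : Equiv.Perm (Fin N), θ ^ lrmaxCount (ins (Fin.castSucc w) σ)) = RR N θ := by
    intro w
    refine Finset.sum_congr rfl fun σ _ => ?_
    rw [lrmax_ins, if_neg (Fin.castSucc_lt_last w).ne, add_zero]
  have h2 : (∑ σ : Equiv.Perm (Fin N), θ ^ lrmaxCount (ins (Fin.last N) σ)) = θ * RR N θ := by
    rw [RR, Finset.mul_sum]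
    refine Finset.sum_congr rfl fun σ _ => ?_
    rw [lrmax_ins, if_pos rfl, pow_succ]
    ring
  rw [Finset.sum_congr rfl (fun w _ => h1 w), h2, Finset.sum_const, Finset.card_univ,
    Fintype.card_fin, nsmul_eq_mul]
  ring

lemma RR_zero (θ : ℝ) : RR 0 θ = 1 := by
  have h : ∀ π : Equiv.Perm (Fin 0), lrmaxCount π = 0 := by
    intro π
    simp [lrmaxCount]
  rw [RR]
  simp [h]

lemma RR_eq (N : ℕ) (θ : ℝ) : RR N θ = ∏ j ∈ Finset.range N, (θ + j) := by
  induction N with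
  | zero => simp [RR_zero]
  | succ n ih => rw [RR_succ, ih, Finset.prod_range_succ]; ring

lemma L_self (π : Equiv.Perm (Fin N)) : L N π = 0 := by
  classical
  rw [L, Finset.card_eq_zero, Finset.filter_eq_empty_iff]
  intro j _
  rintro ⟨h, -⟩
  exact absurd h (not_le.mpr j.isLt)

lemma AA_base (k : ℕ) (θ : ℝ) : AA k k θ = RR k θ := by
  rw [AA, RR]
  refine Finset.sum_congr rfl fun π _ => ?_
  rw [if_pos (L_self π)]

lemma GG_base (k : ℕ) (θ : ℝ) : GG k k θ = 0 := by
  rw [GG]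
  refine Finset.sum_eq_zero fun π _ => ?_
  rw [L_self π, if_neg (by omega)]

lemma AA_succ {k : ℕ} (hk : k ≤ N) (θ : ℝ) : AA (N + 1) k θ = N * AA N k θ := by
  rw [AA, sum_ins, Fin.sum_univ_castSucc]
  have h1 : ∀ w : Fin N, (∑ σ : Equiv.Perm (Fin N),
      if L k (ins (Fin.castSucc w) σ) = 0 then θ ^ lrmaxCount (ins (Fin.castSucc w) σ) else 0)
        = AA N k θ := by
    intro w
    refine Finset.sum_congr rfl fun σ _ => ?_
    rw [L_ins k hk, lrmax_ins, if_neg (Fin.castSucc_lt_last w).ne, add_zero, add_zero]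
  have h2 : (∑ σ : Equiv.Perm (Fin N),
      if L k (ins (Fin.last N) σ) = 0 then θ ^ lrmaxCount (ins (Fin.last N) σ) else 0) = 0 := by
    refine Finset.sum_eq_zero fun σ _ => ?_
    rw [L_ins k hk, if_pos rfl, if_neg (by omega)]
  rw [Finset.sum_congr rfl (fun w _ => h1 w), h2, add_zero, Finset.sum_const, Finset.card_univ,
    Fintype.card_fin, nsmul_eq_mul]

lemma GG_succ {k : ℕ} (hk : k ≤ N) (θ : ℝ) :
    GG (N + 1) k θ = N * GG N k θ + θ * AA N k θ := by
  rw [GG, sum_ins, Fin.sum_univ_castSucc]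
  have h1 : ∀ w : Fin N, (∑ σ : Equiv.Perm (Fin N),
      if L k (ins (Fin.castSucc w) σ) = 1 then θ ^ lrmaxCount (ins (Fin.castSucc w) σ) else 0)
        = GG N k θ := by
    intro w
    refine Finset.sum_congr rfl fun σ _ => ?_
    rw [L_ins k hk, lrmax_ins, if_neg (Fin.castSucc_lt_last w).ne, add_zero, add_zero]
  have h2 : (∑ σ : Equiv.Perm (Fin N),
      if L k (ins (Fin.last N) σ) = 1 then θ ^ lrmaxCount (ins (Fin.last N) σ) else 0)
        = θ * AA N k θ := by
    rw [AA, Finset.mul_sum]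
    refine Finset.sum_congr rfl fun σ _ => ?_
    rw [L_ins k hk, lrmax_ins, if_pos rfl]
    by_cases h : L k σ = 0
    · rw [if_pos (by omega : L k σ + 1 = 1), if_pos h, pow_succ]; ring
    · rw [if_neg (by omega : ¬ L k σ + 1 = 1), if_neg h, mul_zero]
  rw [Finset.sum_congr rfl (fun w _ => h1 w), h2, Finset.sum_const, Finset.card_univ,
    Fintype.card_fin, nsmul_eq_mul]

lemma AA_eq (k : ℕ) (θ : ℝ) : ∀ N, k ≤ N →
    AA N k θ = (∏ i ∈ Finset.Ico k N, (i : ℝ)) * RR k θ := by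
  refine Nat.le_induction ?_ ?_
  · simp [AA_base]
  · intro n hn ih
    rw [AA_succ hn, ih, Finset.prod_Ico_succ_top hn]
    ring

lemma GG_eq (k : ℕ) (hk1 : 1 ≤ k) (θ : ℝ) : ∀ N, k ≤ N →
    GG N k θ = θ * RR k θ * ∑ j ∈ Finset.Ico k N, (∏ i ∈ Finset.Ico k N, (i : ℝ)) / j := by
  refine Nat.le_induction ?_ ?_
  · simp [GG_base]
  · intro n hn ih
    rw [GG_succ hn, ih, AA_eq k θ n hn, Finset.sum_Ico_succ_top hn]
    have hn0 : (n : ℝ) ≠ 0 := Nat.cast_ne_zero.mpr (by omega)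
    have h4 : ∑ j ∈ Finset.Ico k n, (∏ i ∈ Finset.Ico k (n + 1), (i : ℝ)) / (j : ℝ)
        = (n : ℝ) * ∑ j ∈ Finset.Ico k n, (∏ i ∈ Finset.Ico k n, (i : ℝ)) / (j : ℝ) := by
      rw [Finset.mul_sum]
      refine Finset.sum_congr rfl fun j hj => ?_
      rw [Finset.prod_Ico_succ_top hn]
      ring
    have h5 : (∏ i ∈ Finset.Ico k (n + 1), (i : ℝ)) / (n : ℝ)
        = ∏ i ∈ Finset.Ico k n, (i : ℝ) := by
      rw [Finset.prod_Ico_succ_top hn, mul_div_cancel_right₀ _ hn0]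
    rw [h4, h5]
    ring

lemma GG_zero_eq (θ : ℝ) : ∀ N, 1 ≤ N → GG N 0 θ = (Nat.factorial (N - 1) : ℝ) * θ := by
  refine Nat.le_induction ?_ ?_
  · rw [show (1 : ℕ) = 0 + 1 from rfl, GG_succ (le_refl 0), GG_base, AA_base, RR_zero]
    simp
  · intro n hn ih
    obtain ⟨m, rfl⟩ : ∃ m, n = m + 1 := ⟨n - 1, by omega⟩
    rw [GG_succ (Nat.zero_le _), ih, AA_eq 0 θ (m + 1) (Nat.zero_le _)]
    have hz : (∏ i ∈ Finset.Ico 0 (m + 1), (i : ℝ)) = 0 :=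
      Finset.prod_eq_zero (Finset.mem_Ico.mpr ⟨le_refl 0, by omega⟩) (by simp)
    rw [hz]
    simp only [Nat.add_sub_cancel, mul_zero, zero_mul, add_zero]
    push_cast [Nat.factorial_succ]
    ring

open Classical in
lemma W_eq_GG (N k : ℕ) (θ : ℝ) : W ℝ N k θ = GG N k θ := by
  rw [W, GG, Finset.sum_filter]
  refine Finset.sum_congr rfl fun π _ => ?_
  by_cases h : KWinnable k π
  · rw [if_pos h, if_pos ((kwinnable_iff k π).mp h)]
  · rw [if_neg h, if_neg (fun hc => h ((kwinnable_iff k π).mpr hc))]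

lemma fact_prod (k : ℕ) (hk : 1 ≤ k) : ∀ N, k ≤ N →
    Nat.factorial (k - 1) * ∏ i ∈ Finset.Ico k N, i = Nat.factorial (N - 1) := by
  refine Nat.le_induction ?_ ?_
  · simp
  · intro n hn ih
    obtain ⟨m, rfl⟩ : ∃ m, n = m + 1 := ⟨n - 1, by omega⟩
    rw [Finset.prod_Ico_succ_top hn, ← mul_assoc, ih]
    simp only [Nat.add_sub_cancel, Nat.factorial_succ]
    ring

end EwensAux

/-- closed form for the Ewens-weighted count:
for `1 ≤ k ≤ N−1`, `W(N,k) = θ·θ(θ+1)⋯(θ+k−1)·((N−1)!/(k−1)!)·Σ_{i=k}^{N−1} 1/i`,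
and `W(N,0) = (N−1)!·θ`. -/
theorem ewens_W_closed_form (N k : ℕ) (θ : ℝ) :
    (1 ≤ k → k < N →
      W ℝ N k θ = θ * (∏ j ∈ Finset.range k, (θ + j)) *
        ((Nat.factorial (N - 1) : ℝ) / (Nat.factorial (k - 1) : ℝ)) *
        ∑ i ∈ Finset.Icc k (N - 1), (1 : ℝ) / i) ∧
    (1 ≤ N → W ℝ N 0 θ = (Nat.factorial (N - 1) : ℝ) * θ) := by
  constructor
  · intro hk1 hkN
    rw [EwensAux.W_eq_GG, EwensAux.GG_eq k hk1 θ N hkN.le, EwensAux.RR_eq]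
    have hIcc : Finset.Icc k (N - 1) = Finset.Ico k N := by
      rw [← Finset.Ico_add_one_right_eq_Icc]
      congr 1
      omega
    rw [hIcc]
    have hne : (Nat.factorial (k - 1) : ℝ) ≠ 0 := Nat.cast_ne_zero.mpr (Nat.factorial_ne_zero _)
    have hP : (∏ i ∈ Finset.Ico k N, (i : ℝ))
        = (Nat.factorial (N - 1) : ℝ) / (Nat.factorial (k - 1) : ℝ) := by
      rw [eq_div_iff hne]
      have h := EwensAux.fact_prod k hk1 N hkN.le
      have h' : ((Nat.factorial (k - 1) : ℝ)) * ∏ i ∈ Finset.Ico k N, (i : ℝ)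
          = (Nat.factorial (N - 1) : ℝ) := by
        have h2 := congrArg (fun x : ℕ => (x : ℝ)) h
        push_cast at h2
        exact h2
      rw [mul_comm]
      exact h'
    have hS : ∑ j ∈ Finset.Ico k N, (∏ i ∈ Finset.Ico k N, (i : ℝ)) / j
        = (∏ i ∈ Finset.Ico k N, (i : ℝ)) * ∑ j ∈ Finset.Ico k N, (1 : ℝ) / j := by
      rw [Finset.mul_sum]
      exact Finset.sum_congr rfl fun j _ => by ring
    rw [hS, hP]
    ring
  · intro hN
    rw [EwensAux.W_eq_GG]
    exact EwensAux.GG_zero_eq θ N hN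
end

section
/- The classical result specialized at θ=1: the number of permutations of {1,...,N} won by the strategy rejecting the first k ≥ 1 candidates and accepting the next left-to-right maximum equals k·(N−1)!·Σ_{i=k}^{N−1} 1/i. -/
/-
The strategy wins exactly when the overall maximum sits at some position `j ≥ k` and the
largest of the entries before position `j` is one of the first `k`. Composing on the right
with a transposition of two positions `m, m' < j` preserves "maximum at `j`" and moves the
argmax of the entries before `j` from `m` to `m'`; so among the `(N-1)!` permutations with
maximum at `j` this argmax is equidistributed over the `j` earlier positions, and exactly
`k (N-1)! / j` of them are won. Summing over `j = k, …, N-1` gives the formula.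
-/

open Finset Equiv Function
open scoped Nat

namespace Secretary

section Symmetry

variable {α : Type*} [DecidableEq α]

theorem card_eq_of_mul_swap_mem {t : α → Finset (Perm α)} {a b : α}
    (hswap : ∀ π ∈ t a, π * swap a b ∈ t b) (hswap' : ∀ π ∈ t b, π * swap b a ∈ t a) :
    #(t a) = #(t b) := by
  refine card_nbij' (· * swap a b) (· * swap a b) (fun π hπ ↦ hswap π hπ) (fun π hπ ↦ ?_)
    (fun π _ ↦ mul_swap_mul_self a b π) (fun π _ ↦ mul_swap_mul_self a b π)
  simpa only [swap_comm a b, mem_coe] using hswap' π hπ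

theorem card_biUnion_eq_card_mul_of_mul_swap_mem [Fintype α] {s : Finset α}
    {t : α → Finset (Perm α)} (hdisj : (s : Set α).PairwiseDisjoint t)
    (hswap : ∀ a ∈ s, ∀ b ∈ s, ∀ π ∈ t a, π * swap a b ∈ t b) {a : α} (ha : a ∈ s) :
    #(s.biUnion t) = #s * #(t a) := by
  rw [card_biUnion hdisj, ← smul_eq_mul, ← sum_const]
  exact sum_congr rfl fun b hb ↦
    card_eq_of_mul_swap_mem (hswap b hb a ha) (hswap a ha b hb)

end Symmetry

section LinearOrder

variable {α : Type*} [LinearOrder α]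

def IsArgmaxBefore (π : Perm α) (j m : α) : Prop :=
  m < j ∧ ∀ i < j, i ≠ m → π i < π m

theorem IsArgmaxBefore.unique {π : Perm α} {j m m' : α} (h : IsArgmaxBefore π j m)
    (h' : IsArgmaxBefore π j m') : m = m' := by
  by_contra hne
  exact lt_asymm (h.2 m' h'.1 (Ne.symm hne)) (h'.2 m h.1 hne)

variable [Fintype α]

def maxAt (j : α) : Finset (Perm α) := {π | ∀ i, π i ≤ π j}

instance (π : Perm α) (j m : α) : Decidable (IsArgmaxBefore π j m) := by
  unfold IsArgmaxBefore; infer_instance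

def maxAtArgmaxBefore (j m : α) : Finset (Perm α) := {π ∈ maxAt j | IsArgmaxBefore π j m}

@[simp]
theorem mem_maxAt {π : Perm α} {j : α} : π ∈ maxAt j ↔ ∀ i, π i ≤ π j := by
  simp [maxAt]

@[simp]
theorem mem_maxAtArgmaxBefore {π : Perm α} {j m : α} :
    π ∈ maxAtArgmaxBefore j m ↔ π ∈ maxAt j ∧ IsArgmaxBefore π j m := by
  simp [maxAtArgmaxBefore]

theorem eq_of_mem_maxAt {π : Perm α} {j j' : α} (h : π ∈ maxAt j) (h' : π ∈ maxAt j') :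
    j = j' :=
  π.injective <| le_antisymm (mem_maxAt.1 h' j) (mem_maxAt.1 h j')

theorem pairwise_disjoint_maxAt : Pairwise (Disjoint on (maxAt : α → Finset (Perm α))) :=
  fun _ _ hne ↦ disjoint_left.2 fun _ h h' ↦ hne (eq_of_mem_maxAt h h')

theorem pairwise_disjoint_maxAtArgmaxBefore (j : α) :
    Pairwise (Disjoint on (maxAtArgmaxBefore j : α → Finset (Perm α))) :=
  fun _ _ hne ↦ disjoint_left.2 fun _ h h' ↦
    hne ((mem_maxAtArgmaxBefore.1 h).2.unique (mem_maxAtArgmaxBefore.1 h').2)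

theorem exists_isArgmaxBefore (π : Perm α) {j i : α} (hi : i < j) :
    ∃ m, IsArgmaxBefore π j m := by
  obtain ⟨m, hm, hmax⟩ := exists_max_image {i | i < j} π ⟨i, by simpa using hi⟩
  refine ⟨m, by simpa using hm, fun i' hi' hne ↦ ?_⟩
  exact (hmax i' (by simpa using hi')).lt_of_ne (π.injective.ne hne)

theorem mul_swap_mem_maxAt {π : Perm α} {a b : α} (h : π ∈ maxAt a) :
    π * swap a b ∈ maxAt b := by
  simpa using fun i ↦ mem_maxAt.1 h _

theorem mul_swap_mem_maxAtArgmaxBefore {π : Perm α} {j m m' : α} (hm' : m' < j)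
    (h : π ∈ maxAtArgmaxBefore j m) : π * swap m m' ∈ maxAtArgmaxBefore j m' := by
  obtain ⟨hmax, hm, harg⟩ := mem_maxAtArgmaxBefore.1 h
  have hfix : swap m m' j = j := swap_apply_of_ne_of_ne hm.ne' hm'.ne'
  refine mem_maxAtArgmaxBefore.2 ⟨mem_maxAt.2 fun i ↦ ?_, hm', fun i hi hne ↦ ?_⟩
  · simpa [hfix] using mem_maxAt.1 hmax _
  · rw [Perm.mul_apply, Perm.mul_apply, swap_apply_right]
    rcases eq_or_ne i m with rfl | him
    · simpa using harg m' hm' (Ne.symm hne)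
    · rw [swap_apply_of_ne_of_ne him hne]
      exact harg i hi him

theorem card_mul_card_maxAt (j : α) : Fintype.card α * #(maxAt j) = (Fintype.card α)! := by
  have hcover : univ.biUnion (maxAt (α := α)) = univ := by
    refine eq_univ_of_forall fun π ↦ mem_biUnion.2 ?_
    obtain ⟨m, -, hm⟩ := exists_max_image univ π ⟨j, mem_univ j⟩
    exact ⟨m, mem_univ m, mem_maxAt.2 fun i ↦ hm i (mem_univ i)⟩
  rw [← Fintype.card_perm, ← card_univ (α := Perm α), ← hcover,
    card_biUnion_eq_card_mul_of_mul_swap_mem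
      (pairwise_disjoint_maxAt.set_pairwise _)
      (fun a _ b _ π ↦ mul_swap_mem_maxAt) (mem_univ j), card_univ]

theorem card_mul_card_maxAtArgmaxBefore {j m : α} (hm : m < j) :
    #{i | i < j} * #(maxAtArgmaxBefore j m) = #(maxAt j) := by
  have hcover : ({i | i < j} : Finset α).biUnion (maxAtArgmaxBefore j) = maxAt j := by
    ext π
    simp only [mem_biUnion, mem_filter_univ, mem_maxAtArgmaxBefore]
    refine ⟨fun ⟨_, _, h, _⟩ ↦ h, fun h ↦ ?_⟩
    obtain ⟨m', hm'⟩ := exists_isArgmaxBefore π hm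
    exact ⟨m', hm'.1, h, hm'⟩
  rw [← hcover, card_biUnion_eq_card_mul_of_mul_swap_mem (s := {i | i < j})
    ((pairwise_disjoint_maxAtArgmaxBefore j).set_pairwise _)
    (fun a _ b hb π ↦ mul_swap_mem_maxAtArgmaxBefore (by simpa using hb))
    (by simpa using hm)]

end LinearOrder

section Fin

variable {N : ℕ}

theorem IsArgmaxBefore.isLRMax {π : Perm (Fin N)} {j m : Fin N}
    (h : IsArgmaxBefore π j m) : IsLRMax π m :=
  fun i hi ↦ h.2 i (hi.trans h.1) hi.ne

theorem kWinnable_iff {k : ℕ} (hk : 1 ≤ k) {π : Perm (Fin N)} :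
    KWinnable k π ↔ ∃ j : Fin N, k ≤ j ∧ ∃ m : Fin N, m < k ∧ π ∈ maxAtArgmaxBefore j m := by
  constructor
  · rintro ⟨j, hkj, -, hmax, hnone⟩
    obtain ⟨m, hm⟩ := exists_isArgmaxBefore π (i := ⟨0, by omega⟩)
      (Fin.lt_def.2 (show 0 < (j : ℕ) by omega))
    refine ⟨j, hkj, m, ?_, mem_maxAtArgmaxBefore.2 ⟨mem_maxAt.2 hmax, hm⟩⟩
    by_contra! hkm
    exact hnone m hkm hm.1 hm.isLRMax
  · rintro ⟨j, hkj, m, hmk, hπ⟩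
    obtain ⟨hmax, hmj, harg⟩ := mem_maxAtArgmaxBefore.1 hπ
    refine ⟨j, hkj, fun i hi ↦ (mem_maxAt.1 hmax i).lt_of_ne (π.injective.ne hi.ne),
      mem_maxAt.1 hmax, fun i hki hij hi ↦ ?_⟩
    have hmi : m < i := Fin.lt_def.2 (by omega)
    exact lt_asymm (hi m hmi) (harg i hij hmi.ne')

def winningAt (k : ℕ) (j : Fin N) : Finset (Perm (Fin N)) :=
  ({m : Fin N | m < k} : Finset _).biUnion (maxAtArgmaxBefore j)

theorem pairwise_disjoint_winningAt (k : ℕ) :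
    Pairwise (Disjoint on (winningAt k : Fin N → Finset (Perm (Fin N)))) := by
  refine fun j j' hne ↦ (pairwise_disjoint_maxAt hne).mono ?_ ?_ <;>
  · simp only [winningAt, biUnion_subset]
    exact fun _ _ ↦ filter_subset _ _

theorem filter_kWinnable_eq_biUnion {k : ℕ} (hk : 1 ≤ k)
    [DecidablePred (KWinnable (N := N) k)] :
    ({π | KWinnable k π} : Finset (Perm (Fin N))) =
      ({j : Fin N | k ≤ j} : Finset _).biUnion (winningAt k) := by
  ext π
  simp [winningAt, kWinnable_iff hk]

theorem card_maxAt_fin (j : Fin N) : #(maxAt j) = (N - 1)! := by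
  have hN : 0 < N := j.pos
  have h := card_mul_card_maxAt j
  rw [Fintype.card_fin, ← Nat.mul_factorial_pred hN.ne'] at h
  exact Nat.eq_of_mul_eq_mul_left hN h

theorem card_mul_card_maxAtArgmaxBefore_fin {j m : Fin N} (hm : m < j) :
    j * #(maxAtArgmaxBefore j m) = (N - 1)! := by
  have hj : #{i | i < j} = (j : ℕ) := by
    rw [← Fin.card_Iio j]
    congr 1
    ext
    simp
  rw [← hj, card_mul_card_maxAtArgmaxBefore hm, card_maxAt_fin]

theorem card_mul_card_winningAt {k : ℕ} (hk : 1 ≤ k) {j : Fin N} (hkj : k ≤ j) :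
    j * #(winningAt k j) = k * (N - 1)! := by
  have h0 : (⟨0, j.pos⟩ : Fin N) < j := Fin.lt_def.2 (show 0 < (j : ℕ) by omega)
  rw [winningAt, card_biUnion_eq_card_mul_of_mul_swap_mem
    ((pairwise_disjoint_maxAtArgmaxBefore j).set_pairwise _)
    (fun a _ b hb π ↦ mul_swap_mem_maxAtArgmaxBefore
      (Fin.lt_def.2 (by simp only [mem_filter_univ] at hb; omega)))
    (a := ⟨0, j.pos⟩) (by simp only [mem_filter_univ]; omega),
    Fin.card_filter_val_lt, min_eq_right (by omega), mul_left_comm,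
    card_mul_card_maxAtArgmaxBefore_fin h0]

end Fin

end Secretary

open Secretary

open Classical in
theorem classical_secretary_count_general (N k : ℕ) (hk : 1 ≤ k) :
    (((Finset.univ.filter (fun π : Equiv.Perm (Fin N) => KWinnable k π)).card : ℝ)) =
      (k : ℝ) * (Nat.factorial (N - 1) : ℝ) *
        ∑ i ∈ Finset.Icc k (N - 1), (1 : ℝ) / i := by
  have hIcc : ({j : Fin N | k ≤ j} : Finset _).map Fin.valEmbedding = Icc k (N - 1) := by
    ext i
    simp only [mem_map, mem_filter_univ, Fin.valEmbedding_apply, mem_Icc]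
    constructor
    · rintro ⟨j, hkj, rfl⟩
      exact ⟨hkj, by omega⟩
    · rintro ⟨hki, hiN⟩
      exact ⟨⟨i, by omega⟩, hki, rfl⟩
  rw [filter_kWinnable_eq_biUnion hk,
    card_biUnion ((pairwise_disjoint_winningAt k).set_pairwise _), ← hIcc, sum_map,
    Nat.cast_sum, mul_sum]
  refine sum_congr rfl fun j hj ↦ ?_
  have hkj : k ≤ j := by simpa using hj
  have hj0 : ((j : ℕ) : ℝ) ≠ 0 := Nat.cast_ne_zero.2 (by omega)
  rw [Fin.valEmbedding_apply, mul_one_div, eq_div_iff hj0, mul_comm]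
  exact_mod_cast card_mul_card_winningAt hk hkj

open Classical in
/-- classical secretary problem count (`θ = 1`): the number of
permutations of `S_N` won by the strategy that rejects the first `k ≥ 1`
candidates and accepts the next left-to-right maximum is
`k·(N−1)!·Σ_{i=k}^{N−1} 1/i`. -/
theorem classical_secretary_count (N k : ℕ) (hk : 1 ≤ k) (hkN : k < N) :
    (((Finset.univ.filter (fun π : Equiv.Perm (Fin N) => KWinnable k π)).card : ℝ)) =
      (k : ℝ) * (Nat.factorial (N - 1) : ℝ) *
        ∑ i ∈ Finset.Icc k (N - 1), (1 : ℝ) / i :=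
  classical_secretary_count_general N k hk
end

section
/- For the Ewens model with parameter θ > 0, the optimal number of initial rejections κ_N(θ) equals 0 if 0 < θ ≤ (Σ_{i=1}^{N−1} 1/i)^{−1}; equals k (for 1 ≤ k ≤ N−2) if (Σ_{i=k}^{N−1} 1/i)^{−1} < θ ≤ (Σ_{i=k+1}^{N−1} 1/i)^{−1}; and equals N−1 if θ > N−1. Equivalently, W(N,k) ≥ W(N,j) for all j precisely when θ lies in the stated interval for k. -/
namespace Ewens
variable {N : ℕ}

def codeSet (π : Equiv.Perm (Fin N)) (i : Fin N) : Finset (Fin N) :=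
  Finset.univ.filter fun i' => i' < i ∧ π i < π i'

lemma codeSet_card_le (π : Equiv.Perm (Fin N)) (i : Fin N) : (codeSet π i).card ≤ i.1 := by
  calc (codeSet π i).card ≤ (Finset.Iio i).card := by
        apply Finset.card_le_card
        intro x hx
        simp only [codeSet, Finset.mem_filter, Finset.mem_univ, true_and] at hx
        simpa using hx.1
    _ = i.1 := Fin.card_Iio i

def code (π : Equiv.Perm (Fin N)) : ∀ i : Fin N, Fin (i.1 + 1) :=
  fun i => ⟨(codeSet π i).card, Nat.lt_succ_of_le (codeSet_card_le π i)⟩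

/-- The code value counted via values rather than positions. -/
lemma codeSet_card_eq (π : Equiv.Perm (Fin N)) (i : Fin N) :
    (codeSet π i).card =
      (Finset.univ.filter fun y : Fin N => π i < y ∧ ∀ i', i < i' → π i' ≠ y).card := by
  apply Finset.card_bij (fun i' _ => π i')
  · intro i' hi'
    simp only [codeSet, Finset.mem_filter, Finset.mem_univ, true_and] at hi' ⊢
    exact ⟨hi'.2, fun i'' hii'' h => absurd (π.injective h) (by
      intro he; subst he; exact absurd (hi'.1.trans hii'') (lt_irrefl _))⟩
  · intro a ha b hb h; exact π.injective h
  · intro y hy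
    simp only [Finset.mem_filter, Finset.mem_univ, true_and] at hy
    refine ⟨π.symm y, ?_, by simp⟩
    simp only [codeSet, Finset.mem_filter, Finset.mem_univ, true_and]
    constructor
    · rcases lt_trichotomy (π.symm y) i with h | h | h
      · exact h
      · exfalso
        have hyy : π i = y := by rw [← h]; simp
        rw [hyy] at hy
        exact absurd hy.1 (lt_irrefl _)
      · exact absurd (by simp) (hy.2 _ h)
    · simpa using hy.1

lemma strict_aux (p : Fin N → Prop) [DecidablePred p] {x x' : Fin N} (hx : x < x') (hp : p x') :
    (Finset.univ.filter fun y => x' < y ∧ p y).card <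
      (Finset.univ.filter fun y => x < y ∧ p y).card := by
  apply Finset.card_lt_card
  constructor
  · intro y hy
    simp only [Finset.mem_filter, Finset.mem_univ, true_and] at hy ⊢
    exact ⟨hx.trans hy.1, hy.2⟩
  · intro hsub
    have := hsub (by simp [hx, hp] : x' ∈ Finset.univ.filter fun y => x < y ∧ p y)
    simp at this

lemma code_injective : Function.Injective (code (N := N)) := by
  intro π π' h
  -- downward induction: values agree from position N-m on
  have key : ∀ m : ℕ, ∀ j : Fin N, N - m ≤ j.1 → π j = π' j := by
    intro m
    induction m with
    | zero => intro j hj; exact absurd hj (by omega)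
    | succ m ih =>
      intro j hj
      by_cases hcase : N - m ≤ j.1
      · exact ih j hcase
      have hlater : ∀ i' : Fin N, j < i' → π i' = π' i' := by
        intro i' hi'
        exact ih i' (by omega)
      -- the predicate "not a later value"
      set p : Fin N → Prop := fun y => ∀ i', j < i' → π i' ≠ y with hp
      have hpc : ∀ y, (∀ i', j < i' → π i' ≠ y) ↔ (∀ i', j < i' → π' i' ≠ y) := by
        intro y; constructor <;> intro hh i' hi'
        · rw [← hlater i' hi']; exact hh i' hi'
        · rw [hlater i' hi']; exact hh i' hi'
      have hc : (codeSet π j).card = (codeSet π' j).card := by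
        have := congrFun h j
        simpa [code, Fin.ext_iff] using this
      rw [codeSet_card_eq, codeSet_card_eq] at hc
      have hc2 : (Finset.univ.filter fun y : Fin N => π j < y ∧ ∀ i', j < i' → π i' ≠ y).card
          = (Finset.univ.filter fun y : Fin N => π' j < y ∧ ∀ i', j < i' → π i' ≠ y).card := by
        rw [hc]
        congr 1
        apply Finset.filter_congr
        intro y _
        simp only [and_congr_right_iff]
        intro _
        exact (hpc y).symm
      -- p holds at π j and π' j
      have hpπ : ∀ i', j < i' → π i' ≠ π j := fun i' hi' he =>
        absurd (π.injective he) (by intro he2; subst he2; exact absurd hi' (lt_irrefl _))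
      have hpπ' : ∀ i', j < i' → π i' ≠ π' j := by
        intro i' hi'
        rw [hlater i' hi']
        intro he
        have := π'.injective he
        subst this; exact absurd hi' (lt_irrefl _)
      rcases lt_trichotomy (π j) (π' j) with hlt | heq | hgt
      · exact absurd hc2 (ne_of_gt (strict_aux _ hlt hpπ'))
      · exact heq
      · exact absurd hc2 (ne_of_lt (strict_aux _ hgt hpπ))
  ext j
  have := key N j (by omega)
  exact congrArg Fin.val this

lemma code_bijective : Function.Bijective (code (N := N)) := by
  rw [Fintype.bijective_iff_injective_and_card]
  refine ⟨code_injective, ?_⟩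
  rw [Fintype.card_perm, Fintype.card_pi]
  simp only [Fintype.card_fin]
  rw [Fin.prod_univ_eq_prod_range (fun m => m + 1)]
  rw [Finset.prod_range_add_one_eq_factorial]


lemma code_eq_zero_iff (π : Equiv.Perm (Fin N)) (i : Fin N) :
    code π i = 0 ↔ IsLRMax π i := by
  have : code π i = 0 ↔ codeSet π i = ∅ := by
    rw [Fin.ext_iff, ← Finset.card_eq_zero]; rfl
  rw [this, Finset.eq_empty_iff_forall_notMem]
  constructor
  · intro h i' hi'
    have := h i'
    simp only [codeSet, Finset.mem_filter, Finset.mem_univ, true_and, not_and] at this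
    have hne : π i' ≠ π i := fun he => absurd (π.injective he) (ne_of_lt hi')
    rcases lt_or_gt_of_ne hne with h1 | h1
    · exact h1
    · exact absurd h1 (this hi')
  · intro h x
    simp only [codeSet, Finset.mem_filter, Finset.mem_univ, true_and, not_and]
    intro hx
    exact asymm (h x hx)

lemma lrmax_eq_zeros (π : Equiv.Perm (Fin N)) :
    lrmaxCount π = (Finset.univ.filter fun i => code π i = 0).card := by
  unfold lrmaxCount
  congr 1
  apply Finset.filter_congr
  intro i _
  rw [code_eq_zero_iff]
  rfl

lemma kwinnable_iff (hN : 0 < N) (k : ℕ) (π : Equiv.Perm (Fin N)) :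
    KWinnable k π ↔
      (Finset.univ.filter fun i : Fin N => k ≤ i.1 ∧ code π i = 0).card = 1 := by
  constructor
  · rintro ⟨j, hkj, hlr, hmax, hnone⟩
    rw [Finset.card_eq_one]
    refine ⟨j, ?_⟩
    ext i
    simp only [Finset.mem_filter, Finset.mem_univ, true_and, Finset.mem_singleton,
      code_eq_zero_iff]
    constructor
    · rintro ⟨hki, hlri⟩
      rcases lt_trichotomy i j with h | h | h
      · exact absurd hlri (hnone i hki h)
      · exact h
      · exact absurd (hmax i) (not_le.mpr (hlri j h))
    · rintro rfl; exact ⟨hkj, hlr⟩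
  · intro h
    rw [Finset.card_eq_one] at h
    obtain ⟨j, hj⟩ := h
    have hjmem : j ∈ Finset.univ.filter fun i : Fin N => k ≤ i.1 ∧ code π i = 0 := by
      rw [hj]; exact Finset.mem_singleton_self j
    simp only [Finset.mem_filter, Finset.mem_univ, true_and, code_eq_zero_iff] at hjmem
    obtain ⟨hkj, hlr⟩ := hjmem
    -- position of max
    obtain ⟨m, -, hm⟩ := Finset.exists_max_image (Finset.univ : Finset (Fin N)) π
      ⟨⟨0, hN⟩, Finset.mem_univ _⟩
    have hmlr : IsLRMax π m := by
      intro i hi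
      exact lt_of_le_of_ne (hm i (Finset.mem_univ i))
        (fun he => absurd (π.injective he) (ne_of_lt hi))
    have hmj : m = j := by
      by_cases hkm : k ≤ m.1
      · have : m ∈ Finset.univ.filter fun i : Fin N => k ≤ i.1 ∧ code π i = 0 := by
          simp only [Finset.mem_filter, Finset.mem_univ, true_and, code_eq_zero_iff]
          exact ⟨hkm, hmlr⟩
        rw [hj] at this; exact Finset.mem_singleton.mp this
      · exfalso
        have hmj : m < j := by
          rw [Fin.lt_iff_val_lt_val]; omega
        exact absurd (hm j (Finset.mem_univ j)) (not_le.mpr (hlr m hmj))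
    refine ⟨j, hkj, hlr, fun i => hmj ▸ hm i (Finset.mem_univ i), ?_⟩
    intro i hki hij hlri
    have : i ∈ Finset.univ.filter fun i : Fin N => k ≤ i.1 ∧ code π i = 0 := by
      simp only [Finset.mem_filter, Finset.mem_univ, true_and, code_eq_zero_iff]
      exact ⟨hki, hlri⟩
    rw [hj, Finset.mem_singleton] at this
    exact absurd this (ne_of_lt hij)


open Finset

noncomputable def g (θ : ℝ) (k : ℕ) (j i : Fin N) (x : Fin (i.1 + 1)) : ℝ :=
  if i = j then (if x = 0 then θ else 0)
  else if k ≤ i.1 then (if x = 0 then 0 else 1)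
  else (if x = 0 then θ else 1)

def Q (k : ℕ) (j : Fin N) (c : ∀ i : Fin N, Fin (i.1 + 1)) : Prop :=
  c j = 0 ∧ ∀ i, k ≤ i.1 → i ≠ j → c i ≠ 0

open Classical in
lemma claimA (θ : ℝ) (k : ℕ) (j : Fin N) (c : ∀ i : Fin N, Fin (i.1 + 1)) :
    (∏ i, g θ k j i (c i)) =
      if Q k j c then ∏ i : Fin N, (if c i = 0 then θ else 1) else 0 := by
  by_cases hQ : Q k j c
  · rw [if_pos hQ]
    apply Finset.prod_congr rfl
    intro i _
    unfold g
    by_cases hij : i = j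
    · subst hij
      rw [if_pos rfl, if_pos hQ.1, if_pos hQ.1]
    · rw [if_neg hij]
      by_cases hk : k ≤ i.1
      · rw [if_pos hk]
        have : c i ≠ 0 := hQ.2 i hk hij
        rw [if_neg this, if_neg this]
      · rw [if_neg hk]
  · rw [if_neg hQ]
    unfold Q at hQ
    push_neg at hQ
    by_cases hj : c j = 0
    · obtain ⟨i, hki, hij, hi⟩ := hQ hj
      apply Finset.prod_eq_zero (Finset.mem_univ i)
      unfold g
      rw [if_neg hij, if_pos hki, if_pos hi]
    · apply Finset.prod_eq_zero (Finset.mem_univ j)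
      unfold g
      rw [if_pos rfl, if_neg hj]

open Classical in
lemma claimB (θ : ℝ) (k : ℕ) (c : ∀ i : Fin N, Fin (i.1 + 1)) (F : ℝ) :
    (∑ j ∈ Finset.univ.filter (fun j : Fin N => k ≤ j.1), if Q k j c then F else 0) =
      if (Finset.univ.filter fun i : Fin N => k ≤ i.1 ∧ c i = 0).card = 1 then F else 0 := by
  set Z := Finset.univ.filter fun i : Fin N => k ≤ i.1 ∧ c i = 0 with hZ
  have hmemZ : ∀ i, i ∈ Z ↔ (k ≤ i.1 ∧ c i = 0) := by
    intro i; simp [hZ]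
  by_cases h1 : Z.card = 1
  · rw [if_pos h1]
    obtain ⟨j₀, hj₀⟩ := Finset.card_eq_one.mp h1
    have hj₀mem : k ≤ j₀.1 ∧ c j₀ = 0 := (hmemZ j₀).mp (hj₀ ▸ Finset.mem_singleton_self j₀)
    rw [Finset.sum_eq_single_of_mem j₀ (by simp [hj₀mem.1])]
    · rw [if_pos]
      refine ⟨hj₀mem.2, ?_⟩
      intro i hki hij hi
      have : i ∈ Z := (hmemZ i).mpr ⟨hki, hi⟩
      rw [hj₀, Finset.mem_singleton] at this
      exact hij this
    · intro j hjmem hjne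
      rw [if_neg]
      intro hQj
      have : j ∈ Z := (hmemZ j).mpr ⟨by simpa using hjmem, hQj.1⟩
      rw [hj₀, Finset.mem_singleton] at this
      exact hjne this
  · rw [if_neg h1]
    apply Finset.sum_eq_zero
    intro j hjmem
    rw [if_neg]
    intro hQj
    apply h1
    rw [Finset.card_eq_one]
    refine ⟨j, ?_⟩
    ext i
    rw [hmemZ i, Finset.mem_singleton]
    constructor
    · rintro ⟨hki, hi⟩
      by_contra hne
      exact hQj.2 i hki hne hi
    · rintro rfl
      exact ⟨by simpa using hjmem, hQj.1⟩

open Classical in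
lemma sum_g (θ : ℝ) (k : ℕ) (j : Fin N) (i : Fin N) (hji : k ≤ j.1) :
    (∑ x : Fin (i.1 + 1), g θ k j i x) =
      if i.1 = j.1 then θ else if k ≤ i.1 then (i.1 : ℝ) else (θ + i.1) := by
  have hij : (i = j) ↔ (i.1 = j.1) := Fin.ext_iff
  unfold g
  by_cases h : i = j
  · subst h
    rw [if_pos rfl]
    rw [Finset.sum_congr rfl (fun x _ => if_pos rfl)]
    rw [Finset.sum_ite_eq' Finset.univ (0 : Fin (i.1+1)) (fun _ => θ)]
    simp
  · rw [if_neg ((not_congr hij).mp h)]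
    simp only [if_neg h]
    by_cases hk : k ≤ i.1
    · simp only [if_pos hk]
      have : ∀ x : Fin (i.1+1), (if x = 0 then (0:ℝ) else 1) = 1 - (if x = 0 then 1 else 0) := by
        intro x; split <;> norm_num
      rw [Finset.sum_congr rfl (fun x _ => this x), Finset.sum_sub_distrib]
      rw [Finset.sum_ite_eq' Finset.univ (0 : Fin (i.1+1)) (fun _ => (1:ℝ))]
      simp [Finset.card_univ]
    · simp only [if_neg hk]
      have : ∀ x : Fin (i.1+1), (if x = 0 then θ else 1) = 1 + (if x = 0 then θ - 1 else 0) := by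
        intro x; split <;> ring
      rw [Finset.sum_congr rfl (fun x _ => this x), Finset.sum_add_distrib]
      rw [Finset.sum_ite_eq' Finset.univ (0 : Fin (i.1+1)) (fun _ => θ - (1:ℝ))]
      simp [Finset.card_univ]
      ring

open Classical in
lemma prod_s (θ : ℝ) (k : ℕ) (j : Fin N) (hkj : k ≤ j.1) :
    (∏ i : Fin N, if i.1 = j.1 then θ else if k ≤ i.1 then (i.1 : ℝ) else (θ + i.1)) =
      θ * (∏ n ∈ Finset.range k, (θ + n)) * (∏ n ∈ (Finset.Ico k N).erase j.1, (n : ℝ)) := by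
  set t : ℕ → ℝ := fun n => if n = j.1 then θ else if k ≤ n then (n:ℝ) else (θ + n) with ht
  have h1 : (∏ i : Fin N, if i.1 = j.1 then θ else if k ≤ i.1 then (i.1 : ℝ) else (θ + i.1))
      = ∏ n ∈ Finset.range N, t n := by
    rw [← Fin.prod_univ_eq_prod_range t N]
  rw [h1]
  have hkN : k ≤ N := le_trans hkj (le_of_lt j.isLt)
  rw [← Finset.prod_range_mul_prod_Ico t hkN]
  have h2 : (∏ n ∈ Finset.range k, t n) = ∏ n ∈ Finset.range k, (θ + n) := by
    apply Finset.prod_congr rfl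
    intro n hn
    rw [Finset.mem_range] at hn
    rw [ht]
    simp only
    rw [if_neg (by omega), if_neg (by omega)]
  have hjmem : j.1 ∈ Finset.Ico k N := Finset.mem_Ico.mpr ⟨hkj, j.isLt⟩
  have h3 : (∏ n ∈ Finset.Ico k N, t n) = θ * ∏ n ∈ (Finset.Ico k N).erase j.1, (n : ℝ) := by
    rw [← Finset.mul_prod_erase _ t hjmem]
    congr 1
    · rw [ht]; simp
    · apply Finset.prod_congr rfl
      intro n hn
      have hnj : n ≠ j.1 := Finset.ne_of_mem_erase hn
      have hn' : k ≤ n := (Finset.mem_Ico.mp (Finset.mem_of_mem_erase hn)).1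
      rw [ht]
      simp only
      rw [if_neg hnj, if_pos hn']
  rw [h2, h3]
  ring

open Classical in
lemma W_eq_form (hN : 0 < N) (k : ℕ) (θ : ℝ) :
    W ℝ N k θ = ∑ j ∈ Finset.Ico k N,
      θ * (∏ n ∈ Finset.range k, (θ + n)) * (∏ n ∈ (Finset.Ico k N).erase j, (n : ℝ)) := by
  classical
  unfold W
  rw [Finset.sum_filter]
  set G : (∀ i : Fin N, Fin (i.1+1)) → ℝ := fun c =>
    if (Finset.univ.filter fun i : Fin N => k ≤ i.1 ∧ c i = 0).card = 1 then
      ∏ i : Fin N, (if c i = 0 then θ else 1) else 0 with hG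
  have hpt : ∀ π : Equiv.Perm (Fin N),
      (if KWinnable k π then θ ^ lrmaxCount π else 0) = G (code π) := by
    intro π
    rw [hG]
    simp only
    by_cases hw : KWinnable k π
    · rw [if_pos hw, if_pos ((kwinnable_iff hN k π).mp hw)]
      rw [lrmax_eq_zeros π]
      rw [Finset.prod_ite, Finset.prod_const, Finset.prod_const, one_pow, mul_one]
    · rw [if_neg hw, if_neg (fun h => hw ((kwinnable_iff hN k π).mpr h))]
  rw [Finset.sum_congr rfl (fun π _ => hpt π)]
  rw [Function.Bijective.sum_comp (code_bijective) G]
  -- expand G via claims A and B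
  have hGc : ∀ c : ∀ i : Fin N, Fin (i.1+1),
      G c = ∑ j ∈ Finset.univ.filter (fun j : Fin N => k ≤ j.1), ∏ i, g θ k j i (c i) := by
    intro c
    rw [hG]
    simp only
    rw [Finset.sum_congr rfl (fun j _ => claimA θ k j c)]
    rw [claimB θ k c]
  rw [Finset.sum_congr rfl (fun c _ => hGc c)]
  rw [Finset.sum_comm]
  have hinner : ∀ j ∈ Finset.univ.filter (fun j : Fin N => k ≤ j.1),
      (∑ c : ∀ i : Fin N, Fin (i.1+1), ∏ i, g θ k j i (c i)) =
        θ * (∏ n ∈ Finset.range k, (θ + n)) * (∏ n ∈ (Finset.Ico k N).erase j.1, (n : ℝ)) := by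
    intro j hj
    have hkj : k ≤ j.1 := by simpa using hj
    have hfac : (∑ c : ∀ i : Fin N, Fin (i.1+1), ∏ i, g θ k j i (c i)) =
        ∏ i : Fin N, ∑ x : Fin (i.1+1), g θ k j i x := by
      rw [Finset.prod_univ_sum (fun i : Fin N => (Finset.univ : Finset (Fin (i.1+1))))
        (fun i x => g θ k j i x)]
      rw [Fintype.piFinset_univ]
    rw [hfac]
    rw [Finset.prod_congr rfl (fun i _ => sum_g θ k j i hkj)]
    exact prod_s θ k j hkj
  rw [Finset.sum_congr rfl hinner]
  -- reindex from Fin N to ℕ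
  apply Finset.sum_nbij' (i := fun j : Fin N => j.1)
    (j := fun n : ℕ => if h : n < N then (⟨n, h⟩ : Fin N) else ⟨0, hN⟩)
  · intro a ha
    simp only [Finset.mem_filter, Finset.mem_univ, true_and] at ha
    exact Finset.mem_Ico.mpr ⟨ha, a.isLt⟩
  · intro n hn
    rw [Finset.mem_Ico] at hn
    rw [dif_pos hn.2]
    simp [hn.1]
  · intro a ha
    simp [a.isLt]
  · intro n hn
    rw [Finset.mem_Ico] at hn
    rw [dif_pos hn.2]
  · intro a ha
    rfl


noncomputable def Wf (N k : ℕ) (θ : ℝ) : ℝ :=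
  ∑ j ∈ Finset.Ico k N,
    θ * (∏ n ∈ Finset.range k, (θ + n)) * (∏ n ∈ (Finset.Ico k N).erase j, (n : ℝ))

noncomputable def H (N m : ℕ) : ℝ := ∑ j ∈ Finset.Ico m N, 1 / (j : ℝ)

lemma sumProdErase (N a : ℕ) (ha : 1 ≤ a) :
    (∑ j ∈ Finset.Ico a N, ∏ n ∈ (Finset.Ico a N).erase j, (n : ℝ)) =
      (∏ n ∈ Finset.Ico a N, (n : ℝ)) * H N a := by
  unfold H
  rw [Finset.mul_sum]
  apply Finset.sum_congr rfl
  intro j hj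
  have hj' : (1:ℕ) ≤ j := le_trans ha (Finset.mem_Ico.mp hj).1
  have hjne : (j:ℝ) ≠ 0 := by positivity
  have := Finset.prod_erase_mul (Finset.Ico a N) (fun n => (n:ℝ)) hj
  field_simp
  linarith [this]

lemma prodIcoPos (N a : ℕ) (ha : 1 ≤ a) : 0 < ∏ n ∈ Finset.Ico a N, (n : ℝ) := by
  apply Finset.prod_pos
  intro n hn
  have : 1 ≤ n := le_trans ha (Finset.mem_Ico.mp hn).1
  positivity

lemma prodPPos (k : ℕ) {θ : ℝ} (hθ : 0 < θ) : 0 < ∏ n ∈ Finset.range k, (θ + n) := by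
  apply Finset.prod_pos
  intro n hn
  positivity

lemma Wf_diff (N k : ℕ) (θ : ℝ) (hk : k + 1 < N) :
    Wf N (k+1) θ - Wf N k θ =
      θ * (∏ n ∈ Finset.range k, (θ + n)) * (∏ n ∈ Finset.Ico (k+1) N, (n : ℝ)) *
        (θ * H N (k+1) - 1) := by
  have hins : Finset.Ico k N = insert k (Finset.Ico (k+1) N) := by
    ext x; simp [Finset.mem_Ico, Finset.mem_insert]; omega
  have hnot : k ∉ Finset.Ico (k+1) N := by simp
  have herasek : (Finset.Ico k N).erase k = Finset.Ico (k+1) N := by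
    ext x; simp [Finset.mem_Ico, Finset.mem_erase]
  have heraseo : ∀ j ∈ Finset.Ico (k+1) N,
      (Finset.Ico k N).erase j = insert k ((Finset.Ico (k+1) N).erase j) := by
    intro j hj
    rw [Finset.mem_Ico] at hj
    ext x; simp [Finset.mem_Ico, Finset.mem_erase, Finset.mem_insert]; omega
  have hknotin : ∀ j, k ∉ (Finset.Ico (k+1) N).erase j := by
    intro j; simp
  set T := ∏ n ∈ Finset.Ico (k+1) N, (n : ℝ) with hT
  set P := ∏ n ∈ Finset.range k, (θ + n) with hP
  set H' := H N (k+1) with hH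
  have hWk : Wf N k θ = θ * P * (T + k * (T * H')) := by
    unfold Wf
    rw [hins, Finset.sum_insert hnot]
    rw [← hins, herasek]
    have : ∀ j ∈ Finset.Ico (k+1) N,
        θ * P * (∏ n ∈ (Finset.Ico k N).erase j, (n:ℝ)) =
        θ * P * ((k:ℝ) * ∏ n ∈ (Finset.Ico (k+1) N).erase j, (n:ℝ)) := by
      intro j hj
      rw [heraseo j hj, Finset.prod_insert (hknotin j)]
    rw [Finset.sum_congr rfl this]
    rw [← Finset.mul_sum, ← Finset.mul_sum]
    rw [sumProdErase N (k+1) (by omega)]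
    rw [← hT, ← hH]
    ring
  have hWk1 : Wf N (k+1) θ = θ * (P * (θ + k)) * (T * H') := by
    unfold Wf
    rw [← Finset.mul_sum]
    rw [sumProdErase N (k+1) (by omega), ← hT, ← hH]
    rw [Finset.prod_range_succ, ← hP]
  rw [hWk, hWk1]
  ring

lemma Wf_step (N k : ℕ) (θ : ℝ) (hθ : 0 < θ) (hk : k + 1 < N) :
    (θ * H N (k+1) ≤ 1 → Wf N (k+1) θ ≤ Wf N k θ) ∧
    (1 ≤ θ * H N (k+1) → Wf N k θ ≤ Wf N (k+1) θ) := by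
  have hpos : 0 < θ * (∏ n ∈ Finset.range k, (θ + n)) * (∏ n ∈ Finset.Ico (k+1) N, (n : ℝ)) :=
    by
      apply mul_pos (mul_pos hθ (prodPPos k hθ)) (prodIcoPos N (k+1) (by omega))
  constructor
  · intro h
    have := Wf_diff N k θ hk
    nlinarith [this]
  · intro h
    have := Wf_diff N k θ hk
    nlinarith [this]

lemma H_anti (N : ℕ) {m m' : ℕ} (h : m ≤ m') : H N m' ≤ H N m := by
  unfold H
  apply Finset.sum_le_sum_of_subset_of_nonneg
  · apply Finset.Ico_subset_Ico h le_rfl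
  · intro j _ _; positivity

lemma H_pos (N m : ℕ) (h1 : 1 ≤ m) (h2 : m < N) : 0 < H N m := by
  unfold H
  have hm : m ∈ Finset.Ico m N := Finset.mem_Ico.mpr ⟨le_rfl, h2⟩
  have : (1:ℝ)/m ≤ ∑ j ∈ Finset.Ico m N, 1/(j:ℝ) := by
    apply Finset.single_le_sum (fun j _ => by positivity) hm
  have : (0:ℝ) < 1/m := by positivity
  linarith [Finset.single_le_sum (f := fun j : ℕ => 1/(j:ℝ)) (fun j _ => by positivity) hm]

lemma Wf_chain_up (N : ℕ) (θ : ℝ) (hθ : 0 < θ) (a b : ℕ) (hab : a ≤ b) (hb : b < N)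
    (hcond : ∀ m, a ≤ m → m < b → 1 ≤ θ * H N (m+1)) : Wf N a θ ≤ Wf N b θ := by
  induction b, hab using Nat.le_induction with
  | base => exact le_rfl
  | succ b hab ih =>
    have h1 : Wf N a θ ≤ Wf N b θ :=
      ih (by omega) (fun m hm hm' => hcond m hm (by omega))
    have h2 : Wf N b θ ≤ Wf N (b+1) θ :=
      (Wf_step N b θ hθ hb).2 (hcond b hab (by omega))
    linarith

lemma Wf_chain_down (N : ℕ) (θ : ℝ) (hθ : 0 < θ) (a b : ℕ) (hab : a ≤ b) (hb : b < N)
    (hcond : ∀ m, a ≤ m → m < b → θ * H N (m+1) ≤ 1) : Wf N b θ ≤ Wf N a θ := by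
  induction b, hab using Nat.le_induction with
  | base => exact le_rfl
  | succ b hab ih =>
    have h1 : Wf N a θ ≤ Wf N b θ → True := fun _ => trivial
    have h2 : Wf N (b+1) θ ≤ Wf N b θ :=
      (Wf_step N b θ hθ hb).1 (hcond b hab (by omega))
    have h3 : Wf N b θ ≤ Wf N a θ :=
      ih (by omega) (fun m hm hm' => hcond m hm (by omega))
    linarith


open Classical in
lemma W_eq_Wf (hN : 0 < N) (k : ℕ) (θ : ℝ) : W ℝ N k θ = Wf N k θ := by
  rw [W_eq_form hN k θ]; rfl

end Ewens

/-- the optimal number of initial rejections in the Ewens model.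
For `θ` in the stated interval, the corresponding `k` maximizes `W(N,·)`:
`k = 0` when `0 < θ ≤ (Σ_{i=1}^{N−1} 1/i)⁻¹`; `k` when
`(Σ_{i=k}^{N−1} 1/i)⁻¹ < θ ≤ (Σ_{i=k+1}^{N−1} 1/i)⁻¹` (for `1 ≤ k ≤ N−2`);
and `k = N−1` when `θ > N−1`. -/
theorem ewens_optimal_strategy (N : ℕ) (hN : 2 ≤ N) (θ : ℝ) (hθ : 0 < θ) :
    (θ ≤ (∑ i ∈ Finset.Icc 1 (N - 1), (1 : ℝ) / i)⁻¹ →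
      ∀ j ≤ N - 1, W ℝ N j θ ≤ W ℝ N 0 θ) ∧
    (∀ k : ℕ, 1 ≤ k → k ≤ N - 2 →
      (∑ i ∈ Finset.Icc k (N - 1), (1 : ℝ) / i)⁻¹ < θ →
      θ ≤ (∑ i ∈ Finset.Icc (k + 1) (N - 1), (1 : ℝ) / i)⁻¹ →
      ∀ j ≤ N - 1, W ℝ N j θ ≤ W ℝ N k θ) ∧
    ((N : ℝ) - 1 < θ → ∀ j ≤ N - 1, W ℝ N j θ ≤ W ℝ N (N - 1) θ) := by
  have hN0 : 0 < N := by omega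
  have hW : ∀ k, W ℝ N k θ = Ewens.Wf N k θ := fun k => Ewens.W_eq_Wf hN0 k θ
  have hIcc : ∀ a : ℕ, (∑ i ∈ Finset.Icc a (N-1), (1:ℝ)/i) = Ewens.H N a := by
    intro a
    unfold Ewens.H
    congr 1
    ext x; simp only [Finset.mem_Icc, Finset.mem_Ico]; omega
  refine ⟨?_, ?_, ?_⟩
  · intro hθ1 j hj
    rw [hW j, hW 0]
    rw [hIcc 1] at hθ1
    have hH1pos : 0 < Ewens.H N 1 := Ewens.H_pos N 1 le_rfl (by omega)
    have hθH1 : θ * Ewens.H N 1 ≤ 1 := by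
      have := mul_le_mul_of_nonneg_right hθ1 (le_of_lt hH1pos)
      rwa [inv_mul_cancel₀ (ne_of_gt hH1pos)] at this
    apply Ewens.Wf_chain_down N θ hθ 0 j (Nat.zero_le _) (by omega)
    intro m _ hm
    have h1 : Ewens.H N (m+1) ≤ Ewens.H N 1 := Ewens.H_anti N (by omega)
    nlinarith
  · intro k hk1 hk2 hlo hhi j hj
    rw [hW j, hW k]
    rw [hIcc k] at hlo
    rw [hIcc (k+1)] at hhi
    have hkN : k < N := by omega
    by_cases hjk : j ≤ k
    · apply Ewens.Wf_chain_up N θ hθ j k hjk hkN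
      intro m _ hm
      have hHk : 0 < Ewens.H N k := Ewens.H_pos N k hk1 hkN
      have h1 : 1 < θ * Ewens.H N k := by
        have := mul_lt_mul_of_pos_right hlo hHk
        rwa [inv_mul_cancel₀ (ne_of_gt hHk)] at this
      have h2 : Ewens.H N k ≤ Ewens.H N (m+1) := Ewens.H_anti N (by omega)
      nlinarith
    · push_neg at hjk
      apply Ewens.Wf_chain_down N θ hθ k j (le_of_lt hjk) (by omega)
      intro m hm hm'
      have hHk1 : 0 < Ewens.H N (k+1) := Ewens.H_pos N (k+1) (by omega) (by omega)
      have h1 : θ * Ewens.H N (k+1) ≤ 1 := by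
        have := mul_le_mul_of_nonneg_right hhi (le_of_lt hHk1)
        rwa [inv_mul_cancel₀ (ne_of_gt hHk1)] at this
      have h2 : Ewens.H N (m+1) ≤ Ewens.H N (k+1) := Ewens.H_anti N (by omega)
      nlinarith
  · intro hθ3 j hj
    rw [hW j, hW (N-1)]
    apply Ewens.Wf_chain_up N θ hθ j (N-1) hj (by omega)
    intro m _ hm
    set c : ℝ := ((N-1 : ℕ) : ℝ) with hc
    have hcθ : c < θ := by
      rw [hc]
      have : ((N-1:ℕ):ℝ) = (N:ℝ) - 1 := by
        rw [Nat.cast_sub (by omega : 1 ≤ N)]; simp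
      rw [this]; exact hθ3
    have hc1 : 1 ≤ c := by
      rw [hc]
      exact_mod_cast (by omega : 1 ≤ N - 1)
    have hHm : 1 / c ≤ Ewens.H N (m+1) := by
      unfold Ewens.H
      have hmem : N - 1 ∈ Finset.Ico (m+1) N := Finset.mem_Ico.mpr ⟨by omega, by omega⟩
      exact Finset.single_le_sum (f := fun j : ℕ => 1/(j:ℝ)) (fun i _ => by positivity) hmem
    have hcpos : (0:ℝ) < c := by linarith
    calc (1:ℝ) = c * (1/c) := by field_simp
      _ ≤ θ * (1/c) := mul_le_mul_of_nonneg_right hcθ.le (by positivity)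
      _ ≤ θ * Ewens.H N (m+1) := mul_le_mul_of_nonneg_left hHm (by linarith)
end

section
/- For the Mallows model, the closed form W(N,k) = θ^{N−k−1} · [N−1]_θ! · Σ_{i=k}^{N−1} ([k]_θ/[i]_θ) holds for k ≥ 1, and W(N,0) = θ^{N−1}·[N−1]_θ!. -/
/-- θ-analogue `[n]_θ = 1 + θ + ⋯ + θ^{n-1}`. -/
def tA (n : ℕ) (θ : ℝ) : ℝ := ∑ m ∈ Finset.range n, θ ^ m

/-- θ-factorial `[m]_θ! = [m]_θ [m-1]_θ ⋯ [1]_θ`. -/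
def qfact (m : ℕ) (θ : ℝ) : ℝ := ∏ n ∈ Finset.range m, tA (n + 1) θ

open Classical in
/-- Mallows-weighted count of `k`-winnable permutations:
`W(N,k) = Σ_{k-winnable π ∈ S_N} θ^{inv(π)}`. -/
noncomputable def WM (N k : ℕ) (θ : ℝ) : ℝ :=
  ∑ π ∈ Finset.univ.filter (fun π : Equiv.Perm (Fin N) => KWinnable k π),
    θ ^ invCount π



namespace MallowsProof
open Finset

variable {N : ℕ}

def lcode (π : Equiv.Perm (Fin N)) (j : Fin N) : ℕ :=
  (Finset.univ.filter (fun i : Fin N => i < j ∧ π j < π i)).card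


lemma lcode_le (π : Equiv.Perm (Fin N)) (j : Fin N) : lcode π j ≤ (j : ℕ) := by
  calc lcode π j ≤ (Finset.univ.filter (· < j)).card :=
        Finset.card_le_card (by intro i hi; simp only [mem_filter] at hi ⊢; exact ⟨hi.1, hi.2.1⟩)
  _ = j := by rw [← Fin.card_Iio j]; congr 1; ext i; simp


lemma invCount_eq_sum (π : Equiv.Perm (Fin N)) : invCount π = ∑ j, lcode π j := by
  rw [invCount, Finset.card_filter, Fintype.sum_prod_type_right]
  refine Finset.sum_congr rfl fun j _ => ?_
  rw [lcode, Finset.card_filter]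


lemma isLRMax_iff (π : Equiv.Perm (Fin N)) (j : Fin N) : IsLRMax π j ↔ lcode π j = 0 := by
  rw [lcode, Finset.card_eq_zero, Finset.filter_eq_empty_iff]
  constructor
  · intro h i _
    push_neg
    intro hij
    exact le_of_lt (h i hij)
  · intro h i hij
    have := h (Finset.mem_univ i)
    push_neg at this
    rcases lt_or_eq_of_le (this hij) with h' | h'
    · exact h'
    · exact absurd (π.injective h') (ne_of_lt hij)


lemma upset_eq {α : Type*} [LinearOrder α] [DecidableEq α] (U A B : Finset α)
    (hA : A ⊆ U) (hB : B ⊆ U)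
    (hAu : ∀ a ∈ A, ∀ u ∈ U, a ≤ u → u ∈ A)
    (hBu : ∀ b ∈ B, ∀ u ∈ U, b ≤ u → u ∈ B)
    (hcard : A.card = B.card) : A = B := by
  rcases A.eq_empty_or_nonempty with hAe | hAne
  · subst hAe
    exact (Finset.card_eq_zero.mp hcard.symm).symm
  have hBne : B.Nonempty := Finset.card_pos.mp (hcard ▸ Finset.card_pos.mpr hAne)
  -- both are filters by min
  have hAf : A = U.filter (A.min' hAne ≤ ·) := by
    apply Finset.Subset.antisymm
    · intro a ha; simp only [mem_filter]; exact ⟨hA ha, A.min'_le a ha⟩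
    · intro u hu; simp only [mem_filter] at hu
      exact hAu _ (A.min'_mem hAne) u hu.1 hu.2
  have hBf : B = U.filter (B.min' hBne ≤ ·) := by
    apply Finset.Subset.antisymm
    · intro a ha; simp only [mem_filter]; exact ⟨hB ha, B.min'_le a ha⟩
    · intro u hu; simp only [mem_filter] at hu
      exact hBu _ (B.min'_mem hBne) u hu.1 hu.2
  rcases lt_trichotomy (A.min' hAne) (B.min' hBne) with h | h | h
  · exfalso
    have hsub : B ⊂ A := by
      constructor
      · intro b hb
        exact hAu _ (A.min'_mem hAne) b (hB hb) (le_trans h.le (B.min'_le b hb))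
      · intro hcon
        have := hcon (A.min'_mem hAne)
        exact absurd (B.min'_le _ this) (not_le.mpr h)
    exact absurd hcard (Nat.ne_of_gt (Finset.card_lt_card hsub))
  · rw [hAf, hBf, h]
  · exfalso
    have hsub : A ⊂ B := by
      constructor
      · intro b hb
        exact hBu _ (B.min'_mem hBne) b (hA hb) (le_trans h.le (A.min'_le b hb))
      · intro hcon
        have := hcon (B.min'_mem hBne)
        exact absurd (A.min'_le _ this) (not_le.mpr h)
    exact absurd hcard.symm (Nat.ne_of_gt (Finset.card_lt_card hsub))


lemma rank_eq (τ : Equiv.Perm (Fin N)) (i : Fin N) :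
    (Finset.univ.filter (fun a => τ a < τ i)).card = (τ i : ℕ) := by
  rw [← Fin.card_Iio (τ i)]
  apply Finset.card_bij (fun a _ => τ a)
  · intro a ha; simp only [mem_filter] at ha; simpa using ha.2
  · intro a ha b hb hab; exact τ.injective hab
  · intro v hv
    refine ⟨τ.symm v, ?_, by simp⟩
    simp only [mem_filter, mem_univ, true_and, Equiv.apply_symm_apply]
    simpa using hv


lemma code_inj (π σ : Equiv.Perm (Fin N)) (h : ∀ j, lcode π j = lcode σ j) : π = σ := by
  -- key: order comparisons agree
  have key : ∀ n : ℕ, ∀ b : Fin N, (b : ℕ) = n → ∀ a : Fin N, a < b → (π a < π b ↔ σ a < σ b) := by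
    intro n
    induction n using Nat.strong_induction_on with
    | _ n IH =>
      intro b hb a hab
      -- pairwise agreement below b from IH
      have IH' : ∀ x y : Fin N, x < b → y < b → x ≠ y → (π x < π y ↔ σ x < σ y) := by
        intro x y hx hy hxy
        rcases lt_or_gt_of_ne hxy with hlt | hgt
        · exact IH (y : ℕ) (hb ▸ hy) y rfl x hlt
        · have h1 := IH (x : ℕ) (hb ▸ hx) x rfl y hgt
          constructor
          · intro h2
            by_contra h3
            rcases lt_or_eq_of_le (not_lt.mp h3) with h4 | h4
            · exact absurd (h1.mpr h4) (not_lt.mpr h2.le)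
            · exact hxy.symm (σ.injective h4)
          · intro h2
            by_contra h3
            rcases lt_or_eq_of_le (not_lt.mp h3) with h4 | h4
            · exact absurd (h1.mp h4) (not_lt.mpr h2.le)
            · exact hxy.symm (π.injective h4.symm).symm
      set A := Finset.univ.filter (fun i : Fin N => i < b ∧ π b < π i) with hA
      set B := Finset.univ.filter (fun i : Fin N => i < b ∧ σ b < σ i) with hB
      have hcard : (A.image π).card = (B.image π).card := by
        rw [Finset.card_image_of_injective _ π.injective,
          Finset.card_image_of_injective _ π.injective]
        exact h b
      have hAB : A.image π = B.image π := by
        apply upset_eq ((Finset.Iio b).image π)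
        · apply Finset.image_subset_image; intro i hi
          simp only [hA, mem_filter] at hi; simpa using hi.2.1
        · apply Finset.image_subset_image; intro i hi
          simp only [hB, mem_filter] at hi; simpa using hi.2.1
        · intro a' ha' u hu hle
          simp only [Finset.mem_image] at ha' hu ⊢
          obtain ⟨i0, hi0, rfl⟩ := ha'
          obtain ⟨i, hi, rfl⟩ := hu
          simp only [hA, mem_filter, mem_univ, true_and] at hi0
          simp only [Finset.mem_Iio] at hi
          refine ⟨i, ?_, rfl⟩
          simp only [hA, mem_filter, mem_univ, true_and]
          exact ⟨hi, lt_of_lt_of_le hi0.2 hle⟩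
        · intro a' ha' u hu hle
          simp only [Finset.mem_image] at ha' hu ⊢
          obtain ⟨i0, hi0, rfl⟩ := ha'
          obtain ⟨i, hi, rfl⟩ := hu
          simp only [hB, mem_filter, mem_univ, true_and] at hi0
          simp only [Finset.mem_Iio] at hi
          refine ⟨i, ?_, rfl⟩
          simp only [hB, mem_filter, mem_univ, true_and]
          refine ⟨hi, ?_⟩
          rcases eq_or_ne i0 i with rfl | hne
          · exact hi0.2
          · have hπ : π i0 < π i := lt_of_le_of_ne hle (fun hc => hne (π.injective hc))
            have := (IH' i0 i hi0.1 hi hne).mp hπ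
            exact lt_trans hi0.2 this
        · exact hcard
      have hAB' : A = B := by
        apply Finset.image_injective π.injective hAB
      -- conclude for the pair (a, b)
      have hmem : a ∈ A ↔ a ∈ B := by rw [hAB']
      simp only [hA, hB, mem_filter, mem_univ, true_and] at hmem
      have hne : a ≠ b := ne_of_lt hab
      constructor
      · intro h1
        by_contra h2
        rcases lt_or_eq_of_le (not_lt.mp h2) with h3 | h3
        · have := hmem.mpr ⟨hab, h3⟩
          exact absurd this.2 (not_lt.mpr h1.le)
        · exact hne (σ.injective h3.symm)
      · intro h1
        by_contra h2
        rcases lt_or_eq_of_le (not_lt.mp h2) with h3 | h3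
        · have := hmem.mp ⟨hab, h3⟩
          exact absurd this.2 (not_lt.mpr h1.le)
        · exact hne (π.injective h3.symm)
  have key' : ∀ a b : Fin N, a ≠ b → (π a < π b ↔ σ a < σ b) := by
    intro a b hne
    rcases lt_or_gt_of_ne hne with hlt | hgt
    · exact key (b : ℕ) b rfl a hlt
    · have h1 := key (a : ℕ) a rfl b hgt
      constructor
      · intro h2
        by_contra h3
        rcases lt_or_eq_of_le (not_lt.mp h3) with h4 | h4
        · exact absurd (h1.mpr h4) (not_lt.mpr h2.le)
        · exact hne (σ.injective h4).symm
      · intro h2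
        by_contra h3
        rcases lt_or_eq_of_le (not_lt.mp h3) with h4 | h4
        · exact absurd (h1.mp h4) (not_lt.mpr h2.le)
        · exact hne (π.injective h4).symm
  apply Equiv.ext
  intro i
  have h1 : (π i : ℕ) = (σ i : ℕ) := by
    rw [← rank_eq π i, ← rank_eq σ i]
    congr 1
    ext a
    simp only [mem_filter, mem_univ, true_and]
    rcases eq_or_ne a i with rfl | hne
    · simp
    · exact key' a i hne
  exact Fin.ext h1


def codeFn (π : Equiv.Perm (Fin N)) : (j : Fin N) → Fin ((j : ℕ) + 1) :=
  fun j => ⟨lcode π j, Nat.lt_succ_of_le (lcode_le π j)⟩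


lemma codeFn_bij : Function.Bijective (codeFn (N := N)) := by
  rw [Fintype.bijective_iff_injective_and_card]
  constructor
  · intro π σ h
    apply code_inj
    intro j
    have := congrFun h j
    simpa [codeFn, Fin.ext_iff] using this
  · rw [Fintype.card_perm, Fintype.card_pi, Fintype.card_fin]
    simp only [Fintype.card_fin]
    rw [Fin.prod_univ_eq_prod_range (fun i => i + 1) N]
    exact (Finset.prod_range_add_one_eq_factorial N).symm


lemma kwinnable_iff (k : ℕ) (π : Equiv.Perm (Fin N)) :
    KWinnable k π ↔ ∃! j : Fin N, k ≤ (j : ℕ) ∧ lcode π j = 0 := by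
  constructor
  · rintro ⟨j, hk, hlr, hmax, hnone⟩
    refine ⟨j, ⟨hk, (isLRMax_iff π j).mp hlr⟩, ?_⟩
    rintro j' ⟨hk', h0'⟩
    have hlr' := (isLRMax_iff π j').mpr h0'
    rcases lt_trichotomy j' j with h | h | h
    · exact absurd hlr' (hnone j' hk' h)
    · exact h
    · exact absurd (hlr' j h) (not_lt.mpr (hmax j'))
  · rintro ⟨j0, ⟨hk0, h00⟩, huniq⟩
    have hlr0 := (isLRMax_iff π j0).mpr h00
    -- position of the maximum
    obtain ⟨m, -, hm⟩ := Finset.exists_max_image (Finset.univ : Finset (Fin N))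
      (fun i => π i) ⟨j0, Finset.mem_univ j0⟩
    have hm' : ∀ i, π i ≤ π m := fun i => hm i (Finset.mem_univ i)
    have hmlr : IsLRMax π m := by
      intro i hi
      exact lt_of_le_of_ne (hm' i) (fun hc => (ne_of_lt hi) (π.injective hc))
    have hkm : k ≤ (m : ℕ) := by
      by_contra hc
      push_neg at hc
      have hmj : m < j0 := lt_of_lt_of_le (Fin.lt_def.mpr (lt_of_lt_of_le hc hk0)) le_rfl
      exact absurd (hlr0 m hmj) (not_lt.mpr (hm' j0))
    have : m = j0 := huniq m ⟨hkm, (isLRMax_iff π m).mp hmlr⟩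
    subst this
    refine ⟨m, hkm, hmlr, hm', ?_⟩
    intro i hki him hilr
    have := huniq i ⟨hki, (isLRMax_iff π i).mp hilr⟩
    exact absurd this (ne_of_lt him)


lemma tA_succ (n : ℕ) (θ : ℝ) : tA (n + 1) θ = θ * tA n θ + 1 := by
  simpa [tA] using geom_sum_succ (x := θ) (n := n)

set_option maxHeartbeats 1600000 in


set_option maxHeartbeats 1600000 in
lemma WM_eq (N k : ℕ) (θ : ℝ) :
    WM N k θ = ∑ j0 ∈ univ.filter (fun j0 : Fin N => k ≤ (j0 : ℕ)),
      ∏ j : Fin N,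
        (if j = j0 then 1 else if k ≤ (j : ℕ) then θ * tA (j : ℕ) θ else tA ((j : ℕ) + 1) θ) := by
  classical
  rw [WM, Finset.sum_filter]
  have step1 : ∑ π : Equiv.Perm (Fin N), (if KWinnable k π then θ ^ invCount π else 0)
      = ∑ c : (j : Fin N) → Fin ((j : ℕ) + 1),
          (if (∃! j : Fin N, k ≤ (j : ℕ) ∧ (c j : ℕ) = 0) then ∏ j, θ ^ (c j : ℕ) else 0) := by
    apply Fintype.sum_bijective codeFn codeFn_bij
    intro π
    rw [kwinnable_iff, invCount_eq_sum, ← Finset.prod_pow_eq_pow_sum]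
    rfl
  rw [step1]
  have step2 : ∀ c : (j : Fin N) → Fin ((j : ℕ) + 1),
      (if (∃! j : Fin N, k ≤ (j : ℕ) ∧ (c j : ℕ) = 0) then ∏ j, θ ^ (c j : ℕ) else 0)
      = ∑ j0 ∈ univ.filter (fun j0 : Fin N => k ≤ (j0 : ℕ)),
          (if ((c j0 : ℕ) = 0 ∧ ∀ j : Fin N, k ≤ (j : ℕ) → j ≠ j0 → (c j : ℕ) ≠ 0)
            then ∏ j, θ ^ (c j : ℕ) else 0) := by
    intro c
    by_cases hQ : ∃! j : Fin N, k ≤ (j : ℕ) ∧ (c j : ℕ) = 0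
    · rw [if_pos hQ]
      obtain ⟨j0, ⟨hk0, h00⟩, huniq⟩ := hQ
      rw [Finset.sum_eq_single_of_mem j0 (by simpa using hk0)]
      · rw [if_pos]
        refine ⟨h00, ?_⟩
        intro j hkj hne hc0
        exact hne (huniq j ⟨hkj, hc0⟩)
      · intro j0' hj0' hne
        rw [if_neg]
        rintro ⟨h0', hall'⟩
        simp only [mem_filter, mem_univ, true_and] at hj0'
        exact hall' j0 hk0 (fun hc => hne (hc ▸ rfl)) h00
    · rw [if_neg hQ]
      symm
      apply Finset.sum_eq_zero
      intro j0 hj0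
      simp only [mem_filter, mem_univ, true_and] at hj0
      rw [if_neg]
      rintro ⟨h0, hall⟩
      apply hQ
      refine ⟨j0, ⟨hj0, h0⟩, ?_⟩
      rintro j ⟨hkj, hj00⟩
      by_contra hne
      exact hall j hkj hne hj00
  rw [Finset.sum_congr rfl (fun c _ => step2 c), Finset.sum_comm]
  refine Finset.sum_congr rfl fun j0 hj0 => ?_
  simp only [mem_filter, mem_univ, true_and] at hj0
  -- fixed j0 : product formula
  set t : (j : Fin N) → Finset (Fin ((j : ℕ) + 1)) := fun j =>
    if j = j0 then {0} else if k ≤ (j : ℕ) then Finset.univ.erase 0 else Finset.univ with ht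
  have hmem : ∀ c : (j : Fin N) → Fin ((j : ℕ) + 1),
      ((c j0 : ℕ) = 0 ∧ ∀ j : Fin N, k ≤ (j : ℕ) → j ≠ j0 → (c j : ℕ) ≠ 0)
      ↔ c ∈ Fintype.piFinset t := by
    intro c
    rw [Fintype.mem_piFinset]
    constructor
    · rintro ⟨h0, hall⟩ j
      by_cases hjj : j = j0
      · subst hjj
        simp only [ht, if_pos rfl, Finset.mem_singleton]
        exact Fin.ext h0
      · by_cases hkj : k ≤ (j : ℕ)
        · simp only [ht, if_neg hjj, if_pos hkj, Finset.mem_erase, Finset.mem_univ, and_true]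
          intro hc
          exact hall j hkj hjj (by rw [hc]; rfl)
        · simp [ht, if_neg hjj, if_neg hkj]
    · intro hall
      constructor
      · have := hall j0
        simp only [ht, if_pos rfl, Finset.mem_singleton] at this
        rw [this]; rfl
      · intro j hkj hjj hc
        have := hall j
        simp only [ht, if_neg hjj, if_pos hkj, Finset.mem_erase, Finset.mem_univ, and_true] at this
        exact this (Fin.ext hc)
  calc ∑ c : (j : Fin N) → Fin ((j : ℕ) + 1),
        (if ((c j0 : ℕ) = 0 ∧ ∀ j : Fin N, k ≤ (j : ℕ) → j ≠ j0 → (c j : ℕ) ≠ 0)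
          then ∏ j, θ ^ (c j : ℕ) else 0)
      = ∑ c ∈ Fintype.piFinset t, ∏ j, θ ^ (c j : ℕ) := by
        rw [← Finset.sum_filter]
        congr 1
        ext c
        simp only [Finset.mem_filter, Finset.mem_univ, true_and]
        exact hmem c
    _ = ∏ j : Fin N, ∑ v ∈ t j, θ ^ (v : ℕ) := (Finset.prod_univ_sum t (fun j (v : Fin ((j:ℕ)+1)) => θ ^ (v : ℕ))).symm
    _ = _ := by
        refine Finset.prod_congr rfl fun j _ => ?_
        by_cases hjj : j = j0
        · subst hjj
          simp [ht]
        · by_cases hkj : k ≤ (j : ℕ)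
          · rw [ht]
            simp only [if_neg hjj, if_pos hkj]
            rw [← Finset.filter_ne' Finset.univ 0]
            have h1 : ∑ v ∈ Finset.univ.filter (· ≠ (0 : Fin ((j:ℕ)+1))), θ ^ (v : ℕ)
                = (∑ v : Fin ((j:ℕ)+1), θ ^ (v : ℕ)) - θ ^ ((0 : Fin ((j:ℕ)+1)) : ℕ) := by
              rw [Finset.filter_ne' Finset.univ 0]
              rw [← Finset.sum_erase_add Finset.univ _ (Finset.mem_univ (0 : Fin ((j:ℕ)+1)))]
              ring
            rw [h1, Fin.sum_univ_eq_sum_range (fun m => θ ^ m)]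
            have : (∑ m ∈ Finset.range ((j : ℕ) + 1), θ ^ m) = tA ((j : ℕ) + 1) θ := rfl
            rw [this, tA_succ]
            simp
          · rw [ht]
            simp only [if_neg hjj, if_neg hkj]
            rw [Fin.sum_univ_eq_sum_range (fun m => θ ^ m)]
            rfl


lemma tA_pos {θ : ℝ} (hθ : 0 < θ) {n : ℕ} (hn : 1 ≤ n) : 0 < tA n θ := by
  apply Finset.sum_pos (fun m _ => pow_pos hθ m)
  exact Finset.nonempty_range_iff.mpr (by omega)


lemma qfact_eq_Ico (m : ℕ) (θ : ℝ) : qfact m θ = ∏ i ∈ Ico 1 (m + 1), tA i θ := by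
  rw [Finset.prod_Ico_eq_prod_range]
  simp only [Nat.add_sub_cancel, qfact]
  exact Finset.prod_congr rfl fun i _ => by rw [Nat.add_comm 1 i]


lemma key_prod {N k : ℕ} (θ : ℝ) (hk : 1 ≤ k) (hkN : k ≤ N) :
    qfact k θ * ∏ m ∈ Ico k N, tA m θ = qfact (N - 1) θ * tA k θ := by
  have hN : 1 ≤ N := le_trans hk hkN
  rw [qfact_eq_Ico, qfact_eq_Ico, Nat.sub_add_cancel hN]
  rw [Finset.prod_Ico_succ_top hk]
  rw [mul_comm (∏ i ∈ Ico 1 k, tA i θ) (tA k θ), mul_assoc,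
    Finset.prod_Ico_consecutive _ hk hkN, mul_comm]


theorem partA (N k : ℕ) (θ : ℝ) (hθ : 0 < θ) (hk : 1 ≤ k) (hkN : k < N) :
    (∑ j0 ∈ univ.filter (fun j0 : Fin N => k ≤ (j0 : ℕ)),
      ∏ j : Fin N,
        (if j = j0 then 1 else if k ≤ (j : ℕ) then θ * tA (j : ℕ) θ else tA ((j : ℕ) + 1) θ))
    = θ ^ (N - k - 1) * qfact (N - 1) θ * ∑ i ∈ Finset.Icc k (N - 1), tA k θ / tA i θ := by
  have hIco : (Finset.range N).filter (fun m => k ≤ m) = Finset.Ico k N := by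
    ext m; simp [Finset.mem_Ico, and_comm]
  calc ∑ j0 ∈ univ.filter (fun j0 : Fin N => k ≤ (j0 : ℕ)),
        ∏ j : Fin N,
          (if j = j0 then 1 else if k ≤ (j : ℕ) then θ * tA (j : ℕ) θ else tA ((j : ℕ) + 1) θ)
      = ∑ m0 ∈ Finset.Ico k N, ∏ m ∈ Finset.range N,
          (if m = m0 then 1 else if k ≤ m then θ * tA m θ else tA (m + 1) θ) := by
        rw [Finset.sum_filter, ← hIco, Finset.sum_filter]
        have hterm : ∀ j0 : Fin N, (if k ≤ (j0 : ℕ) then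
              ∏ j : Fin N, (if j = j0 then 1 else if k ≤ (j : ℕ) then θ * tA (j : ℕ) θ
                else tA ((j : ℕ) + 1) θ) else 0)
            = (fun m0 => if k ≤ m0 then
              ∏ m ∈ Finset.range N, (if m = m0 then 1 else if k ≤ m then θ * tA m θ
                else tA (m + 1) θ) else 0) (j0 : ℕ) := by
          intro j0
          by_cases h : k ≤ (j0 : ℕ)
          · rw [if_pos h]
            simp only [if_pos h, Fin.ext_iff]
            rw [Fin.prod_univ_eq_prod_range (fun m => if m = (j0 : ℕ) then 1
              else if k ≤ m then θ * tA m θ else tA (m + 1) θ) N]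
          · rw [if_neg h]; simp only [if_neg h]
        rw [Finset.sum_congr rfl fun j0 _ => hterm j0]
        rw [Fin.sum_univ_eq_sum_range (fun m0 => if k ≤ m0 then
          ∏ m ∈ Finset.range N, (if m = m0 then 1 else if k ≤ m then θ * tA m θ
            else tA (m + 1) θ) else 0) N]
    _ = ∑ m0 ∈ Finset.Ico k N,
          qfact k θ * (θ ^ (N - k - 1) * ((∏ m ∈ Finset.Ico k N, tA m θ) / tA m0 θ)) := by
        refine Finset.sum_congr rfl fun m0 hm0 => ?_
        simp only [Finset.mem_Ico] at hm0
        rw [← Finset.prod_range_mul_prod_Ico _ hkN.le]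
        have h1 : ∏ m ∈ Finset.range k,
            (if m = m0 then 1 else if k ≤ m then θ * tA m θ else tA (m + 1) θ) = qfact k θ := by
          refine Finset.prod_congr rfl fun m hm => ?_
          rw [Finset.mem_range] at hm
          rw [if_neg (by omega), if_neg (by omega)]
        have hm0mem : m0 ∈ Finset.Ico k N := Finset.mem_Ico.mpr hm0
        have htne : tA m0 θ ≠ 0 := ne_of_gt (tA_pos hθ (le_trans hk hm0.1))
        have h2 : ∏ m ∈ Finset.Ico k N,
            (if m = m0 then 1 else if k ≤ m then θ * tA m θ else tA (m + 1) θ)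
            = θ ^ (N - k - 1) * ((∏ m ∈ Finset.Ico k N, tA m θ) / tA m0 θ) := by
          rw [← Finset.mul_prod_erase _ _ hm0mem, if_pos rfl, one_mul]
          have h3 : ∏ m ∈ (Finset.Ico k N).erase m0,
              (if m = m0 then 1 else if k ≤ m then θ * tA m θ else tA (m + 1) θ)
              = ∏ m ∈ (Finset.Ico k N).erase m0, (θ * tA m θ) := by
            refine Finset.prod_congr rfl fun m hm => ?_
            rw [Finset.mem_erase, Finset.mem_Ico] at hm
            rw [if_neg hm.1, if_pos hm.2.1]
          rw [h3, Finset.prod_mul_distrib, Finset.prod_const,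
            Finset.card_erase_of_mem hm0mem, Nat.card_Ico]
          congr 1
          rw [eq_div_iff htne]
          exact Finset.prod_erase_mul _ _ hm0mem
        rw [h1, h2]
    _ = θ ^ (N - k - 1) * qfact (N - 1) θ * ∑ i ∈ Finset.Icc k (N - 1), tA k θ / tA i θ := by
        have hIcc : Finset.Icc k (N - 1) = Finset.Ico k N := by
          rw [← Finset.Ico_add_one_right_eq_Icc]
          congr 1
          omega
        rw [hIcc, Finset.mul_sum]
        refine Finset.sum_congr rfl fun m0 hm0 => ?_
        have h := key_prod (N := N) θ hk hkN.le
        calc qfact k θ * (θ ^ (N - k - 1) * ((∏ m ∈ Finset.Ico k N, tA m θ) / tA m0 θ))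
            = θ ^ (N - k - 1) * ((qfact k θ * ∏ m ∈ Finset.Ico k N, tA m θ) / tA m0 θ) := by
              ring
          _ = θ ^ (N - k - 1) * ((qfact (N - 1) θ * tA k θ) / tA m0 θ) := by rw [h]
          _ = θ ^ (N - k - 1) * qfact (N - 1) θ * (tA k θ / tA m0 θ) := by ring


theorem partB (N : ℕ) (θ : ℝ) (hN : 1 ≤ N) :
    (∑ j0 ∈ univ.filter (fun j0 : Fin N => 0 ≤ (j0 : ℕ)),
      ∏ j : Fin N,
        (if j = j0 then 1 else if 0 ≤ (j : ℕ) then θ * tA (j : ℕ) θ else tA ((j : ℕ) + 1) θ))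
    = θ ^ (N - 1) * qfact (N - 1) θ := by
  have hN0 : 0 < N := hN
  set z : Fin N := ⟨0, hN0⟩ with hz
  rw [Finset.filter_true_of_mem (fun _ _ => Nat.zero_le _)]
  rw [Finset.sum_eq_single_of_mem z (Finset.mem_univ z)]
  · have h1 : ∏ j : Fin N,
        (if j = z then 1 else if 0 ≤ (j : ℕ) then θ * tA (j : ℕ) θ else tA ((j : ℕ) + 1) θ)
        = ∏ m ∈ Finset.range N, (if m = 0 then (1:ℝ) else θ * tA m θ) := by
      have : ∀ j : Fin N,
          (if j = z then 1 else if 0 ≤ (j : ℕ) then θ * tA (j : ℕ) θ else tA ((j : ℕ) + 1) θ)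
          = (fun m => if m = 0 then (1:ℝ) else θ * tA m θ) (j : ℕ) := by
        intro j
        simp only [Fin.ext_iff, hz, Nat.zero_le, if_true]
      rw [Finset.prod_congr rfl fun j _ => this j]
      exact Fin.prod_univ_eq_prod_range (fun m => if m = 0 then (1:ℝ) else θ * tA m θ) N
    rw [h1, ← Finset.prod_range_mul_prod_Ico _ hN, Finset.prod_range_one, if_pos rfl, one_mul]
    have h2 : ∏ m ∈ Finset.Ico 1 N, (if m = 0 then (1:ℝ) else θ * tA m θ)
        = ∏ m ∈ Finset.Ico 1 N, (θ * tA m θ) := by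
      refine Finset.prod_congr rfl fun m hm => ?_
      rw [Finset.mem_Ico] at hm
      rw [if_neg (by omega)]
    rw [h2, Finset.prod_mul_distrib, Finset.prod_const, Nat.card_Ico]
    congr 1
    rw [qfact_eq_Ico, Nat.sub_add_cancel hN]
  · intro j0 _ hne
    apply Finset.prod_eq_zero (Finset.mem_univ z)
    rw [if_neg (Ne.symm hne), if_pos (Nat.zero_le _)]
    have : tA (z : ℕ) θ = 0 := by simp [hz, tA]
    rw [this, mul_zero]

end MallowsProof

/-- closed form for the Mallows-weighted count:
`W(N,k) = θ^{N−k−1}·[N−1]_θ!·Σ_{i=k}^{N−1} [k]_θ/[i]_θ` for `k ≥ 1`, and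
`W(N,0) = θ^{N−1}·[N−1]_θ!`. -/
theorem mallows_W_closed_form (N k : ℕ) (θ : ℝ) (hθ : 0 < θ) :
    (1 ≤ k → k < N →
      WM N k θ = θ ^ (N - k - 1) * qfact (N - 1) θ *
        ∑ i ∈ Finset.Icc k (N - 1), tA k θ / tA i θ) ∧
    (1 ≤ N → WM N 0 θ = θ ^ (N - 1) * qfact (N - 1) θ) := by
  constructor
  · intro hk hkN
    rw [MallowsProof.WM_eq]
    exact MallowsProof.partA N k θ hθ hk hkN
  · intro hN
    rw [MallowsProof.WM_eq]
    exact MallowsProof.partB N θ hN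
end
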